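/- arXiv:1511.03424 — 8 statements merged into one kernel-verified Lean document; each statement's English description precedes it below -/
import Mathlib

section
/- Let λ ∈ ℂ with |λ| > 1 and let G : ℂ² → ℂ² be G(z₁,z₂) = (λz₁, λz₂). A holomorphic automorphism F of ℂ² fixing the origin satisfies F∘G = G∘F if and only if there exist a, b, c, d ∈ ℂ with ad − bc ≠ 0 such that F(z₁,z₂) = (az₁ + bz₂, cz₁ + dz₂) for all (z₁,z₂) ∈ ℂ². (Theorem 3.4, case 1) -/
/-!
Commuting with `G = λ • id` makes `F` homogeneous: `F (λ • z) = λ • F z`. Then the remainder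
`R = F - dF₀` is homogeneous as well and `R z = o(‖z‖)` at `0`. Pulling a fixed `z` to the
origin along `λ⁻ⁿ • z` gives `‖R z‖ / ‖z‖ = ‖R (λ⁻ⁿ • z)‖ / ‖λ⁻ⁿ • z‖ → 0`, so `R = 0` and `F` is
linear; injectivity of `F` forces its determinant to be nonzero.
-/

open Filter Topology Asymptotics

lemma map_pow_smul_of_map_smul {M α β : Type*} [Monoid M] [MulAction M α] [MulAction M β]
    {f : α → β} {c : M} (hf : ∀ x, f (c • x) = c • f x) (n : ℕ) (x : α) :
    f (c ^ n • x) = c ^ n • f x := by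
  induction n with
  | zero => simp
  | succ n ih => rw [pow_succ', mul_smul, mul_smul, hf, ih]

section Homogeneous

variable {𝕜 E F : Type*} [NontriviallyNormedField 𝕜] [NormedAddCommGroup E] [NormedSpace 𝕜 E]
  [NormedAddCommGroup F] [NormedSpace 𝕜 F]

lemma map_zero_of_map_smul {f : E → F} {c : 𝕜} (hc : c ≠ 1) (hf : ∀ x, f (c • x) = c • f x) :
    f 0 = 0 := by
  have h : (c - 1) • f 0 = 0 := by rw [sub_smul, one_smul, ← hf, smul_zero, sub_self]
  exact (smul_eq_zero.mp h).resolve_left (sub_ne_zero.mpr hc)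

lemma eq_zero_of_isLittleO_of_map_smul {g : E → F} {c : 𝕜} (hc : 1 < ‖c‖)
    (hg : g =o[𝓝 0] fun x => x) (hgc : ∀ x, g (c • x) = c • g x) : g = 0 := by
  have hc0 : c ≠ 0 := norm_pos_iff.mp (one_pos.trans hc)
  funext x
  have hscale (n : ℕ) : g (c⁻¹ ^ n • x) = c⁻¹ ^ n • g x := calc
    g (c⁻¹ ^ n • x) = c⁻¹ ^ n • c ^ n • g (c⁻¹ ^ n • x) := by
      rw [smul_smul, ← mul_pow, inv_mul_cancel₀ hc0, one_pow, one_smul]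
    _ = c⁻¹ ^ n • g x := by
      rw [← map_pow_smul_of_map_smul hgc, smul_smul, ← mul_pow, mul_inv_cancel₀ hc0, one_pow,
        one_smul]
  have hpow : Tendsto (fun n : ℕ => c⁻¹ ^ n) atTop (𝓝 0) :=
    tendsto_pow_atTop_nhds_zero_of_norm_lt_one (by rwa [norm_inv, inv_lt_one₀ (one_pos.trans hc)])
  have hto0 : Tendsto (fun n : ℕ => c⁻¹ ^ n • x) atTop (𝓝 0) := by
    simpa using hpow.smul_const x
  have hsmall : (fun n : ℕ => c⁻¹ ^ n • g x) =o[atTop] fun n => c⁻¹ ^ n • x := by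
    simpa only [Function.comp_def, hscale] using hg.comp_tendsto hto0
  have hconst : (fun _ : ℕ => g x) =o[atTop] fun _ => x := by
    simpa only [smul_smul, ← mul_pow, mul_inv_cancel₀ hc0, one_pow, one_smul] using
      (isBigO_refl (fun n : ℕ => c ^ n) atTop).smul_isLittleO hsmall
  exact isLittleO_const_const_iff.mp hconst

theorem eq_fderiv_of_map_smul {f : E → F} {c : 𝕜} (hc : 1 < ‖c‖) (hf : DifferentiableAt 𝕜 f 0)
    (hfc : ∀ x, f (c • x) = c • f x) : f = fderiv 𝕜 f 0 := by
  have hf0 : f 0 = 0 := map_zero_of_map_smul (fun h => by simp [h] at hc) hfc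
  have hrem : (fun x => f x - fderiv 𝕜 f 0 x) =o[𝓝 0] fun x => x := by
    simpa [hf0] using hasFDerivAt_iff_isLittleO_nhds_zero.mp hf.hasFDerivAt
  have hzero := eq_zero_of_isLittleO_of_map_smul hc hrem fun x => by
    rw [hfc, map_smul, smul_sub]
  funext x
  exact sub_eq_zero.mp (congrFun hzero x)

end Homogeneous

lemma LinearMap.apply_prod_mk {R : Type*} [CommSemiring R] (L : R × R →ₗ[R] R × R) (z₁ z₂ : R) :
    L (z₁, z₂) =
      ((L (1, 0)).1 * z₁ + (L (0, 1)).1 * z₂, (L (1, 0)).2 * z₁ + (L (0, 1)).2 * z₂) := by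
  have h : ((z₁, z₂) : R × R) = z₁ • (1, 0) + z₂ • (0, 1) := by simp
  rw [h, map_add, map_smul, map_smul]
  ext <;> simp [mul_comm]

lemma det_ne_zero_of_injective {K : Type*} [Field K] {a b c d : K}
    (h : Function.Injective fun z : K × K => (a * z.1 + b * z.2, c * z.1 + d * z.2)) :
    a * d - b * c ≠ 0 := by
  intro hdet
  have hdc : (d, -c) = (0, 0) :=
    h (by simp only [Prod.mk.injEq]; exact ⟨by linear_combination hdet, by ring⟩)
  have hba : (-b, a) = (0, 0) :=
    h (by simp only [Prod.mk.injEq]; exact ⟨by ring, by linear_combination hdet⟩)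
  simp only [Prod.mk.injEq, neg_eq_zero] at hdc hba
  have h10 : ((1 : K), (0 : K)) = (0, 0) := h (by simp [hdc, hba])
  simp at h10

theorem namba_case_1_general (lam : ℂ) (hlam : 1 < ‖lam‖)
    (F Finv : ℂ × ℂ → ℂ × ℂ)
    (hF : Differentiable ℂ F)
    (hleft : Function.LeftInverse Finv F) :
    (∀ z₁ z₂ : ℂ, F (lam * z₁, lam * z₂)
        = (lam * (F (z₁, z₂)).1, lam * (F (z₁, z₂)).2)) ↔
      ∃ a b c d : ℂ, a * d - b * c ≠ 0 ∧
        ∀ z₁ z₂ : ℂ, F (z₁, z₂) = (a * z₁ + b * z₂, c * z₁ + d * z₂) := by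
  constructor
  · intro hcomm
    obtain ⟨L, rfl⟩ : ∃ L : ℂ × ℂ →L[ℂ] ℂ × ℂ, F = L :=
      ⟨_, eq_fderiv_of_map_smul hlam (hF 0) fun z => hcomm z.1 z.2⟩
    have hmatrix := (L : ℂ × ℂ →ₗ[ℂ] ℂ × ℂ).apply_prod_mk
    refine ⟨_, _, _, _, det_ne_zero_of_injective ?_, hmatrix⟩
    convert hleft.injective using 1
    funext z
    exact (hmatrix z.1 z.2).symm
  · rintro ⟨a, b, c, d, -, hlinear⟩ z₁ z₂
    simp only [hlinear, Prod.mk.injEq]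
    constructor <;> ring

/-- Theorem 3.4, case 1: for `G(z₁,z₂) = (λz₁, λz₂)` with `|λ| > 1`, a holomorphic
automorphism `F` of `ℂ²` fixing the origin commutes with `G` iff
`F(z₁,z₂) = (az₁ + bz₂, cz₁ + dz₂)` with `ad − bc ≠ 0`. -/
theorem namba_case_1 (lam : ℂ) (hlam : 1 < ‖lam‖)
    (F Finv : ℂ × ℂ → ℂ × ℂ)
    (hF : Differentiable ℂ F) (hFinv : Differentiable ℂ Finv)
    (hleft : Function.LeftInverse Finv F)
    (hright : Function.RightInverse Finv F)
    (hF0 : F (0, 0) = (0, 0)) :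
    (∀ z₁ z₂ : ℂ, F (lam * z₁, lam * z₂)
        = (lam * (F (z₁, z₂)).1, lam * (F (z₁, z₂)).2)) ↔
      ∃ a b c d : ℂ, a * d - b * c ≠ 0 ∧
        ∀ z₁ z₂ : ℂ, F (z₁, z₂) = (a * z₁ + b * z₂, c * z₁ + d * z₂) :=
  namba_case_1_general lam hlam F Finv hF hleft
end

section
/- Let μ ∈ ℂ with |μ| > 1, let p ≥ 2 be an integer, and let G : ℂ² → ℂ² be G(z₁,z₂) = (μᵖz₁, μz₂). A holomorphic automorphism F of ℂ² fixing the origin satisfies F∘G = G∘F if and only if there exist a, b, d ∈ ℂ with ad ≠ 0 such that F(z₁,z₂) = (az₁ + b·z₂ᵖ, dz₂) for all (z₁,z₂) ∈ ℂ². (Theorem 3.4, case 2) -/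
/-!
Commuting with `G` makes the components of `F = (f, g)` quasi-homogeneous,
`f (t ^ p * w, t * z) = t ^ p * f (w, z)` and `g (t ^ p * w, t * z) = t * g (w, z)` for every
`t : ℂ`: along each curve `s ↦ (s ^ p * w, s * z)` the component is an entire function `φ` with
`φ (μ * s) = μ ^ m * φ s`, and since `‖μ‖ > 1` comparing Taylor coefficients forces `φ` to be a
monomial of degree `m`.

Homogeneity reduces everything to the slice `z = 1`, which is read off at infinity:
`f (z⁻ᵖ, 1) = z⁻ᵖ * f (1, z)`, so the slope of `u ↦ f (u, 1)` at `0` tends to `f (1, 0)` as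
`u → ∞` and is constant by Liouville. Similarly `g (z⁻ᵖ, 1) = g (1, z) / z` has a limit because
`g` vanishes on `z = 0` (take `t` a primitive `p`-th root of unity, which needs `p ≥ 2`), so
`u ↦ g (u, 1)` is constant. Finally injectivity and surjectivity of `F` give `a ≠ 0` and `d ≠ 0`.
-/

open Filter Topology

theorem Differentiable.apply_eq_apply_one_mul_pow {φ : ℂ → ℂ} (hφ : Differentiable ℂ φ) {μ : ℂ}
    (hμ : 1 < ‖μ‖) {m : ℕ} (h : ∀ t, φ (μ * t) = μ ^ m * φ t) (t : ℂ) :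
    φ t = φ 1 * t ^ m := by
  have hcoeff : ∀ n ≠ m, iteratedDeriv n φ 0 = 0 := by
    intro n hn
    have hscale : μ ^ n * iteratedDeriv n φ 0 = μ ^ m * iteratedDeriv n φ 0 := by
      have := congrFun (iteratedDeriv_comp_const_mul (n := n) hφ.contDiff μ) 0
      rwa [funext h, iteratedDeriv_const_mul_field, mul_zero, eq_comm] at this
    have hpow : μ ^ n ≠ μ ^ m := fun heq =>
      hn <| pow_right_injective₀ (zero_lt_one.trans hμ) hμ.ne' (by simpa using congrArg (‖·‖) heq)
    exact (mul_eq_mul_right_iff.mp hscale).resolve_left hpow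
  have htaylor : ∀ s, φ s = (m.factorial : ℂ)⁻¹ * iteratedDeriv m φ 0 * s ^ m := fun s => by
    rw [← Complex.taylorSeries_eq_of_entire' (c := 0) (z := s) hφ,
      tsum_eq_single m fun n hn => by simp [hcoeff n hn]]
    simp
  rw [htaylor t, htaylor 1, one_pow, mul_one]

theorem Complex.tendsto_cpow_inv_natCast_nhdsNE_zero {p : ℕ} (hp : p ≠ 0) :
    Tendsto (fun v : ℂ => v ^ (p⁻¹ : ℂ)) (𝓝[≠] 0) (𝓝[≠] 0) := by
  have hne : ∀ v : ℂ, v ≠ 0 → v ^ (p⁻¹ : ℂ) ≠ 0 := fun v hv =>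
    (cpow_ne_zero_iff_of_exponent_ne_zero (by simpa using hp)).mpr hv
  refine tendsto_nhdsWithin_iff.mpr ⟨?_, eventually_nhdsWithin_of_forall hne⟩
  have hre : 0 < (p⁻¹ : ℂ).re := by simp [Nat.pos_of_ne_zero hp]
  have hcont : ContinuousAt (fun v : ℂ => v ^ (p⁻¹ : ℂ)) 0 :=
    (continuousAt_cpow_zero_of_re_pos hre).comp (f := fun v : ℂ => (v, (p⁻¹ : ℂ)))
      (continuousAt_id.prodMk continuousAt_const)
  simpa [zero_cpow (inv_ne_zero (Nat.cast_ne_zero.mpr hp))] using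
    hcont.tendsto.mono_left nhdsWithin_le_nhds

theorem Differentiable.apply_eq_of_apply_inv_pow {χ Φ : ℂ → ℂ} (hχ : Differentiable ℂ χ) {p : ℕ}
    (hp : p ≠ 0) {L : ℂ} (hΦ : Tendsto Φ (𝓝[≠] 0) (𝓝 L)) (h : ∀ z ≠ 0, χ (z ^ p)⁻¹ = Φ z)
    (w : ℂ) : χ w = L := by
  refine hχ.apply_eq_of_tendsto_cocompact w ?_
  rw [← Metric.cobounded_eq_cocompact]
  have hroot := (Complex.tendsto_cpow_inv_natCast_nhdsNE_zero hp).comp tendsto_inv₀_cobounded'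
  refine (hΦ.comp hroot).congr' ?_
  filter_upwards [hroot self_mem_nhdsWithin] with w hw
  rw [Function.comp_apply, ← h _ hw, Function.comp_apply, Complex.cpow_nat_inv_pow _ hp, inv_inv]

def IsQuasiHomogeneous (p m : ℕ) (Φ : ℂ × ℂ → ℂ) : Prop :=
  ∀ t w z : ℂ, Φ (t ^ p * w, t * z) = t ^ m * Φ (w, z)

namespace IsQuasiHomogeneous

variable {p m : ℕ} {Φ : ℂ × ℂ → ℂ}

theorem of_apply_mul_eq (hΦ : Differentiable ℂ Φ) {μ : ℂ} (hμ : 1 < ‖μ‖)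
    (h : ∀ w z, Φ (μ ^ p * w, μ * z) = μ ^ m * Φ (w, z)) : IsQuasiHomogeneous p m Φ := by
  intro t w z
  have hcurve : Differentiable ℂ fun s : ℂ => Φ (s ^ p * w, s * z) := hΦ.comp (by fun_prop)
  have := hcurve.apply_eq_apply_one_mul_pow hμ (m := m) (t := t) fun s => by
    rw [mul_pow, mul_assoc, mul_assoc, h]
  simpa [mul_comm] using this

theorem apply_eq_of_ne_zero (hΦ : IsQuasiHomogeneous p m Φ) (w : ℂ) {z : ℂ} (hz : z ≠ 0) :
    Φ (w, z) = z ^ m * Φ (w / z ^ p, 1) := by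
  rw [← hΦ, mul_div_cancel₀ _ (pow_ne_zero p hz), mul_one]

theorem eq_of_degree_eq_weight (hΦ : IsQuasiHomogeneous p p Φ) (hdiff : Differentiable ℂ Φ)
    (hp : p ≠ 0) (w z : ℂ) : Φ (w, z) = Φ (1, 0) * w + Φ (0, 1) * z ^ p := by
  have hcont := hdiff.continuous
  set h : ℂ → ℂ := fun u => Φ (u, 1)
  have hslope : ∀ z ≠ 0, dslope h 0 (z ^ p)⁻¹ = Φ (1, z) - Φ (0, 1) * z ^ p := by
    intro z hz
    rw [dslope_of_ne _ (inv_ne_zero (pow_ne_zero p hz)), slope_def_field,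
      hΦ.apply_eq_of_ne_zero 1 hz]
    simp only [h, sub_zero, one_div, div_inv_eq_mul]
    ring
  have hlim : Tendsto (fun z => Φ (1, z) - Φ (0, 1) * z ^ p) (𝓝[≠] 0) (𝓝 (Φ (1, 0))) := by
    have : Continuous fun z => Φ (1, z) - Φ (0, 1) * z ^ p := by fun_prop
    simpa [hp] using (this.tendsto 0).mono_left nhdsWithin_le_nhds
  have hdslope : Differentiable ℂ (dslope h 0) := fun u =>
    ((Complex.differentiableOn_dslope univ_mem).mpr
      (hdiff.comp (by fun_prop)).differentiableOn).differentiableAt univ_mem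
  have haffine : ∀ u, Φ (u, 1) = Φ (0, 1) + Φ (1, 0) * u := fun u => by
    have := sub_smul_dslope h 0 u
    rw [hdslope.apply_eq_of_apply_inv_pow hp hlim hslope u] at this
    simp only [h, smul_eq_mul, sub_zero] at this
    linear_combination -this
  refine congrFun (Continuous.ext_on (dense_compl_singleton 0) (f := fun z => Φ (w, z))
    (g := fun z => Φ (1, 0) * w + Φ (0, 1) * z ^ p) (by fun_prop) (by fun_prop)
    fun z hz => ?_) z
  dsimp only
  rw [hΦ.apply_eq_of_ne_zero w hz, haffine]
  field_simp [pow_ne_zero p (show z ≠ 0 from hz)]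
  ring

theorem eq_of_degree_one (hΦ : IsQuasiHomogeneous p 1 Φ) (hdiff : Differentiable ℂ Φ)
    (hp : 2 ≤ p) (w z : ℂ) : Φ (w, z) = Φ (0, 1) * z := by
  have haxis : ∀ u, Φ (u, 0) = 0 := by
    intro u
    have hζ := Complex.isPrimitiveRoot_exp p (by omega)
    have hfix := hΦ (Complex.exp (2 * Real.pi * Complex.I / p)) u 0
    rw [hζ.pow_eq_one, one_mul, mul_zero, pow_one] at hfix
    have : (Complex.exp (2 * Real.pi * Complex.I / p) - 1) * Φ (u, 0) = 0 := by
      linear_combination -hfix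
    exact (mul_eq_zero.mp this).resolve_left (sub_ne_zero.mpr (hζ.ne_one (by omega)))
  have hslope : ∀ z ≠ 0, Φ ((z ^ p)⁻¹, 1) = slope (fun z => Φ (1, z)) 0 z := by
    intro z hz
    rw [slope_def_field, haxis, sub_zero, sub_zero, hΦ.apply_eq_of_ne_zero 1 hz, one_div, pow_one,
      mul_div_cancel_left₀ _ hz]
  have hlim : Tendsto (slope (fun z => Φ (1, z)) 0) (𝓝[≠] 0)
      (𝓝 (deriv (fun z => Φ (1, z)) 0)) :=
    hasDerivAt_iff_tendsto_slope.mp ((hdiff.comp (by fun_prop)).differentiableAt).hasDerivAt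
  have hconst : ∀ u, Φ (u, 1) = deriv (fun z => Φ (1, z)) 0 :=
    (hdiff.comp (by fun_prop)).apply_eq_of_apply_inv_pow (by omega) hlim hslope
  rcases eq_or_ne z 0 with rfl | hz
  · rw [haxis, mul_zero]
  · rw [hΦ.apply_eq_of_ne_zero w hz, hconst, hconst 0, pow_one, mul_comm]

end IsQuasiHomogeneous

theorem mul_ne_zero_of_injective_of_surjective {F : ℂ × ℂ → ℂ × ℂ} {a b d : ℂ} {p : ℕ}
    (hinj : Function.Injective F) (hsurj : Function.Surjective F)
    (hF : ∀ w z, F (w, z) = (a * w + b * z ^ p, d * z)) : a * d ≠ 0 := by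
  refine mul_ne_zero (fun ha => ?_) (fun hd => ?_)
  · have := @hinj (1, 0) (0, 0) (by simp [hF, ha])
    simp at this
  · obtain ⟨⟨w, z⟩, hwz⟩ := hsurj (0, 1)
    simp [hF, hd] at hwz

theorem namba_case_2_general (μ : ℂ) (hμ : 1 < ‖μ‖)
    (p : ℕ) (hp : 2 ≤ p)
    (F Finv : ℂ × ℂ → ℂ × ℂ)
    (hF : Differentiable ℂ F)
    (hleft : Function.LeftInverse Finv F)
    (hright : Function.RightInverse Finv F) :
    (∀ z₁ z₂ : ℂ, F (μ ^ p * z₁, μ * z₂)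
        = (μ ^ p * (F (z₁, z₂)).1, μ * (F (z₁, z₂)).2)) ↔
      ∃ a b d : ℂ, a * d ≠ 0 ∧
        ∀ z₁ z₂ : ℂ, F (z₁, z₂) = (a * z₁ + b * z₂ ^ p, d * z₂) := by
  constructor
  · intro hcomm
    have hfst : IsQuasiHomogeneous p p fun x => (F x).1 :=
      .of_apply_mul_eq hF.fst hμ fun w z => congrArg Prod.fst (hcomm w z)
    have hsnd : IsQuasiHomogeneous p 1 fun x => (F x).2 :=
      .of_apply_mul_eq hF.snd hμ fun w z => by simpa using congrArg Prod.snd (hcomm w z)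
    have hform : ∀ z₁ z₂, F (z₁, z₂) =
        ((F (1, 0)).1 * z₁ + (F (0, 1)).1 * z₂ ^ p, (F (0, 1)).2 * z₂) := fun z₁ z₂ =>
      Prod.ext (hfst.eq_of_degree_eq_weight hF.fst (by omega) z₁ z₂)
        (hsnd.eq_of_degree_one hF.snd hp z₁ z₂)
    exact ⟨_, _, _,
      mul_ne_zero_of_injective_of_surjective hleft.injective hright.surjective hform, hform⟩
  · rintro ⟨a, b, d, -, hform⟩ z₁ z₂
    simp only [hform, Prod.mk.injEq]
    constructor <;> ring

/-- Theorem 3.4, case 2: for `G(z₁,z₂) = (μᵖz₁, μz₂)` with `|μ| > 1` and `p ≥ 2`,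
a holomorphic automorphism `F` of `ℂ²` fixing the origin commutes with `G` iff
`F(z₁,z₂) = (az₁ + b·z₂ᵖ, dz₂)` with `ad ≠ 0`. -/
theorem namba_case_2 (μ : ℂ) (hμ : 1 < ‖μ‖)
    (p : ℕ) (hp : 2 ≤ p)
    (F Finv : ℂ × ℂ → ℂ × ℂ)
    (hF : Differentiable ℂ F) (hFinv : Differentiable ℂ Finv)
    (hleft : Function.LeftInverse Finv F)
    (hright : Function.RightInverse Finv F)
    (hF0 : F (0, 0) = (0, 0)) :
    (∀ z₁ z₂ : ℂ, F (μ ^ p * z₁, μ * z₂)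
        = (μ ^ p * (F (z₁, z₂)).1, μ * (F (z₁, z₂)).2)) ↔
      ∃ a b d : ℂ, a * d ≠ 0 ∧
        ∀ z₁ z₂ : ℂ, F (z₁, z₂) = (a * z₁ + b * z₂ ^ p, d * z₂) :=
  namba_case_2_general μ hμ p hp F Finv hF hleft hright
end

section
/- Let λ, μ ∈ ℂ with |λ| ≥ |μ| > 1 and λ ≠ μᵐ for every positive integer m, and let G : ℂ² → ℂ² be G(z₁,z₂) = (λz₁, μz₂). A holomorphic automorphism F of ℂ² fixing the origin satisfies F∘G = G∘F if and only if there exist a, d ∈ ℂ with ad ≠ 0 such that F(z₁,z₂) = (az₁, dz₂) for all (z₁,z₂) ∈ ℂ². (Theorem 3.4, case 3) -/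
/-!
Each component `φ` of `F` satisfies `φ (λ z, μ w) = ν φ (z, w)` with `ν ∈ {λ, μ}`, `‖ν‖ ≤ ‖λ‖`.
Undoing `n` steps of `G` shows that `φ (·, w)` grows at most linearly on the circles
`‖z‖ = ‖λ‖ ^ n`, so by Cauchy's estimates `φ (z, w) = α w + β w * z`, where
`α (μ w) = ν α w` and `β (μ w) = (ν / λ) β w`. Comparing Taylor coefficients, an entire `f` with
`f (μ w) = c f w` vanishes unless `c = μ ^ m`, and is then a multiple of `w ^ m`. Non-resonance
leaves only `F = (a z₁, d z₂)`, and injectivity of `F` gives `a d ≠ 0`.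
-/

open Metric Filter Topology

namespace Complex

variable {f : ℂ → ℂ}

theorem eq_sum_of_iteratedDeriv_eq_zero (hf : Differentiable ℂ f) (s : Finset ℕ)
    (hs : ∀ k ∉ s, iteratedDeriv k f 0 = 0) (z : ℂ) :
    f z = ∑ k ∈ s, iteratedDeriv k f 0 / k.factorial * z ^ k := by
  refine (hasSum_taylorSeries_of_entire hf 0 z).unique (hasSum_sum_of_ne_finset_zero ?_) |>.trans
    (Finset.sum_congr rfl fun k _ => ?_)
  · intro k hk
    simp [hs k hk]
  · simp only [sub_zero, smul_eq_mul]
    ring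

theorem eq_affine_of_norm_le_mul_on_spheres (hf : Differentiable ℂ f) {C : ℝ} {R : ℕ → ℝ}
    (hR : Tendsto R atTop atTop) (hbound : ∀ n, ∀ z ∈ sphere (0 : ℂ) (R n), ‖f z‖ ≤ C * R n)
    (z : ℂ) : f z = f 0 + (f 1 - f 0) * z := by
  have hcoeff : ∀ k ∉ Finset.range 2, iteratedDeriv k f 0 = 0 := by
    intro k hk
    obtain ⟨j, rfl⟩ : ∃ j, k = j + 2 := ⟨k - 2, by simp at hk; omega⟩
    have hle : ∀ᶠ n in atTop,
        ‖iteratedDeriv (j + 2) f 0‖ ≤ (j + 2).factorial * C / R n ^ (j + 1) := by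
      filter_upwards [hR.eventually_gt_atTop 0] with n hn
      calc ‖iteratedDeriv (j + 2) f 0‖ ≤ (j + 2).factorial * (C * R n) / R n ^ (j + 2) :=
            norm_iteratedDeriv_le_of_forall_mem_sphere_norm_le _ hn hf.diffContOnCl (hbound n)
        _ = (j + 2).factorial * C / R n ^ (j + 1) := by
          field_simp
          ring
    have hlim : Tendsto (fun n => ((j + 2).factorial : ℝ) * C / R n ^ (j + 1)) atTop (𝓝 0) :=
      tendsto_const_nhds.div_atTop ((tendsto_pow_atTop j.succ_ne_zero).comp hR)
    exact norm_le_zero_iff.mp (le_of_tendsto_of_tendsto tendsto_const_nhds hlim hle)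
  have h := eq_sum_of_iteratedDeriv_eq_zero hf _ hcoeff
  simp only [Finset.sum_range_succ, Finset.sum_range_zero, iteratedDeriv_zero, iteratedDeriv_one,
    Nat.factorial_zero, Nat.factorial_one, Nat.cast_one, div_one, pow_zero, pow_one, mul_one,
    zero_add] at h
  rw [h z, h 1]
  ring

theorem iteratedDeriv_eq_zero_of_apply_mul_eq (hf : Differentiable ℂ f) {μ c : ℂ}
    (h : ∀ z, f (μ * z) = c * f z) {k : ℕ} (hk : c ≠ μ ^ k) : iteratedDeriv k f 0 = 0 := by
  have hderiv := congrFun (iteratedDeriv_comp_const_mul (hf.contDiff (n := k)) μ) 0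
  simp only [h, iteratedDeriv_const_mul_field, mul_zero] at hderiv
  exact (mul_eq_mul_right_iff.mp hderiv).resolve_left hk

theorem eq_zero_of_apply_mul_eq (hf : Differentiable ℂ f) {μ c : ℂ}
    (h : ∀ z, f (μ * z) = c * f z) (hc : ∀ k : ℕ, c ≠ μ ^ k) (z : ℂ) : f z = 0 := by
  simpa using eq_sum_of_iteratedDeriv_eq_zero hf ∅
    (fun k _ => iteratedDeriv_eq_zero_of_apply_mul_eq hf h (hc k)) z

theorem eq_monomial_of_apply_mul_eq (hf : Differentiable ℂ f) {μ : ℂ} (hμ : 1 < ‖μ‖) {m : ℕ}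
    (h : ∀ z, f (μ * z) = μ ^ m * f z) (z : ℂ) :
    f z = iteratedDeriv m f 0 / m.factorial * z ^ m := by
  have hinj : ∀ k, μ ^ m = μ ^ k → m = k := fun k hk =>
    pow_right_injective₀ (by linarith) hμ.ne' (by simpa using congrArg norm hk)
  simpa using eq_sum_of_iteratedDeriv_eq_zero hf {m}
    (fun k hk => iteratedDeriv_eq_zero_of_apply_mul_eq hf h
      fun he => hk (Finset.mem_singleton.mpr (hinj k he).symm)) z

end Complex

section

variable {φ : ℂ × ℂ → ℂ} {lam μ ν : ℂ}

theorem apply_pow_mul_eq (h : ∀ z w, φ (lam * z, μ * w) = ν * φ (z, w)) (n : ℕ) (z w : ℂ) :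
    φ (lam ^ n * z, μ ^ n * w) = ν ^ n * φ (z, w) := by
  induction n generalizing z w with
  | zero => simp
  | succ n ih => rw [pow_succ', pow_succ', mul_assoc, mul_assoc, h, ih, pow_succ', mul_assoc]

theorem eq_affine_of_apply_mul_eq (hφ : Differentiable ℂ φ) (hlam : 1 < ‖lam‖) (hμ : 1 ≤ ‖μ‖)
    (hν : ‖ν‖ ≤ ‖lam‖) (h : ∀ z w, φ (lam * z, μ * w) = ν * φ (z, w)) (z w : ℂ) :
    φ (z, w) = φ (0, w) + (φ (1, w) - φ (0, w)) * z := by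
  have hlam0 : lam ≠ 0 := norm_pos_iff.mp (by linarith)
  have hμ0 : μ ≠ 0 := norm_pos_iff.mp (by linarith)
  obtain ⟨M, hM⟩ := ((isCompact_closedBall (0 : ℂ) 1).prod (isCompact_closedBall (0 : ℂ) ‖w‖))
    |>.exists_bound_of_continuousOn hφ.continuous.continuousOn
  refine Complex.eq_affine_of_norm_le_mul_on_spheres (f := fun z => φ (z, w))
    (hφ.comp (differentiable_id.prodMk (differentiable_const w))) (C := M)
    (tendsto_pow_atTop_atTop_of_one_lt hlam) (fun n z hz => ?_) z
  have hz : ‖z‖ = ‖lam‖ ^ n := by simpa using hz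
  have hmem : (z / lam ^ n, w / μ ^ n) ∈ closedBall (0 : ℂ) 1 ×ˢ closedBall (0 : ℂ) ‖w‖ := by
    simp only [Set.mem_prod, mem_closedBall, dist_zero_right, norm_div, norm_pow, hz]
    exact ⟨(div_self (by positivity)).le, div_le_self (norm_nonneg w) (one_le_pow₀ hμ)⟩
  have hscale := apply_pow_mul_eq h n (z / lam ^ n) (w / μ ^ n)
  rw [mul_div_cancel₀ _ (pow_ne_zero n hlam0), mul_div_cancel₀ _ (pow_ne_zero n hμ0)] at hscale
  calc ‖φ (z, w)‖ = ‖ν‖ ^ n * ‖φ (z / lam ^ n, w / μ ^ n)‖ := by rw [hscale, norm_mul, norm_pow]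
    _ ≤ ‖lam‖ ^ n * M :=
      mul_le_mul (pow_le_pow_left₀ (norm_nonneg ν) hν n) (hM _ hmem) (norm_nonneg _)
        (by positivity)
    _ = M * ‖lam‖ ^ n := mul_comm _ _

theorem slope_apply_mul_eq (hlam : lam ≠ 0) (h : ∀ z w, φ (lam * z, μ * w) = ν * φ (z, w))
    (haff : ∀ z w, φ (z, w) = φ (0, w) + (φ (1, w) - φ (0, w)) * z) (w : ℂ) :
    φ (1, μ * w) - φ (0, μ * w) = ν / lam * (φ (1, w) - φ (0, w)) := by
  have h1 := h 1 w
  have h0 := h 0 w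
  rw [mul_one, haff lam] at h1
  rw [mul_zero] at h0
  field_simp
  linear_combination h1 - h0

theorem exists_eq_mul_fst_of_apply_mul_eq (hφ : Differentiable ℂ φ) (hlam : 1 < ‖lam‖)
    (hμ : 1 < ‖μ‖) (hne : ∀ m : ℕ, 0 < m → lam ≠ μ ^ m)
    (h : ∀ z w, φ (lam * z, μ * w) = lam * φ (z, w)) : ∃ a, ∀ z w, φ (z, w) = a * z := by
  have hlam0 : lam ≠ 0 := norm_pos_iff.mp (by linarith)
  have haff := eq_affine_of_apply_mul_eq hφ hlam hμ.le le_rfl h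
  have hcoeff : Differentiable ℂ fun w => φ (0, w) :=
    hφ.comp ((differentiable_const 0).prodMk differentiable_id)
  have hslope : Differentiable ℂ fun w => φ (1, w) - φ (0, w) :=
    (hφ.comp ((differentiable_const 1).prodMk differentiable_id)).sub hcoeff
  have hzero : ∀ w, φ (0, w) = 0 :=
    Complex.eq_zero_of_apply_mul_eq hcoeff (fun w => by simpa using h 0 w) fun k hk => by
      rcases k.eq_zero_or_pos with rfl | hk0
      · rw [pow_zero] at hk
        rw [hk, norm_one] at hlam
        exact hlam.false
      · exact hne k hk0 hk
  have hconst : ∀ w, φ (1, w) - φ (0, w) = φ (1, 0) - φ (0, 0) := fun w => by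
    simpa using Complex.eq_monomial_of_apply_mul_eq hslope hμ (m := 0)
      (fun w => by simpa [hlam0] using slope_apply_mul_eq hlam0 h haff w) w
  exact ⟨φ (1, 0) - φ (0, 0), fun z w => by rw [haff, hconst, hzero w, zero_add]⟩

theorem exists_eq_mul_snd_of_apply_mul_eq (hφ : Differentiable ℂ φ) (hμ : 1 < ‖μ‖)
    (hlamμ : ‖μ‖ ≤ ‖lam‖) (hne : lam ≠ μ) (h : ∀ z w, φ (lam * z, μ * w) = μ * φ (z, w)) :
    ∃ d, ∀ z w, φ (z, w) = d * w := by
  have hlam : 1 < ‖lam‖ := hμ.trans_le hlamμ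
  have haff := eq_affine_of_apply_mul_eq hφ hlam hμ.le hlamμ h
  have hcoeff : Differentiable ℂ fun w => φ (0, w) :=
    hφ.comp ((differentiable_const 0).prodMk differentiable_id)
  have hslope : Differentiable ℂ fun w => φ (1, w) - φ (0, w) :=
    (hφ.comp ((differentiable_const 1).prodMk differentiable_id)).sub hcoeff
  have hlin := Complex.eq_monomial_of_apply_mul_eq hcoeff hμ (m := 1)
    (fun w => by simpa using h 0 w)
  have hzero : ∀ w, φ (1, w) - φ (0, w) = 0 :=
    Complex.eq_zero_of_apply_mul_eq hslope
      (slope_apply_mul_eq (norm_pos_iff.mp (by linarith)) h haff) fun k hk => by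
      rcases k with _ | j
      · rw [pow_zero, div_eq_one_iff_eq (norm_pos_iff.mp (by linarith))] at hk
        exact hne hk.symm
      · have hle : ‖μ / lam‖ ≤ 1 := by
          rw [norm_div]
          exact div_le_one_of_le₀ hlamμ (norm_nonneg _)
        rw [hk, norm_pow] at hle
        exact (one_lt_pow₀ hμ j.succ_ne_zero).not_ge hle
  exact ⟨deriv (fun w => φ (0, w)) 0, fun z w => by
    rw [haff, hzero w, zero_mul, add_zero, hlin w]
    simp⟩

end

theorem namba_case_3_general (lam μ : ℂ)
    (hμ : 1 < ‖μ‖) (hlamμ : ‖μ‖ ≤ ‖lam‖)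
    (hne : ∀ m : ℕ, 0 < m → lam ≠ μ ^ m)
    (F Finv : ℂ × ℂ → ℂ × ℂ)
    (hF : Differentiable ℂ F)
    (hleft : Function.LeftInverse Finv F) :
    (∀ z₁ z₂ : ℂ, F (lam * z₁, μ * z₂)
        = (lam * (F (z₁, z₂)).1, μ * (F (z₁, z₂)).2)) ↔
      ∃ a d : ℂ, a * d ≠ 0 ∧
        ∀ z₁ z₂ : ℂ, F (z₁, z₂) = (a * z₁, d * z₂) := by
  constructor
  · intro hcomm
    obtain ⟨a, ha⟩ := exists_eq_mul_fst_of_apply_mul_eq hF.fst (hμ.trans_le hlamμ) hμ hne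
      fun z w => congrArg Prod.fst (hcomm z w)
    obtain ⟨d, hd⟩ := exists_eq_mul_snd_of_apply_mul_eq hF.snd hμ hlamμ
      (by simpa using hne 1 one_pos) fun z w => congrArg Prod.snd (hcomm z w)
    have hF_eq : ∀ z w, F (z, w) = (a * z, d * w) := fun z w => Prod.ext (ha z w) (hd z w)
    refine ⟨a, d, mul_ne_zero ?_ ?_, hF_eq⟩ <;> rintro rfl
    · exact one_ne_zero <| congrArg Prod.fst <|
        hleft.injective (a₁ := (1, 0)) (a₂ := (0, 0)) (by simp [hF_eq])
    · exact one_ne_zero <| congrArg Prod.snd <|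
        hleft.injective (a₁ := (0, 1)) (a₂ := (0, 0)) (by simp [hF_eq])
  · rintro ⟨a, d, -, hF_eq⟩ z₁ z₂
    simp only [hF_eq, Prod.mk.injEq]
    constructor <;> ring

/-- Theorem 3.4, case 3: for `G(z₁,z₂) = (λz₁, μz₂)` with `|λ| ≥ |μ| > 1` and
`λ ≠ μᵐ` for every positive integer `m`, a holomorphic automorphism `F` of `ℂ²`
fixing the origin commutes with `G` iff `F(z₁,z₂) = (az₁, dz₂)` with `ad ≠ 0`. -/
theorem namba_case_3 (lam μ : ℂ)
    (hμ : 1 < ‖μ‖) (hlamμ : ‖μ‖ ≤ ‖lam‖)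
    (hne : ∀ m : ℕ, 0 < m → lam ≠ μ ^ m)
    (F Finv : ℂ × ℂ → ℂ × ℂ)
    (hF : Differentiable ℂ F) (hFinv : Differentiable ℂ Finv)
    (hleft : Function.LeftInverse Finv F)
    (hright : Function.RightInverse Finv F)
    (hF0 : F (0, 0) = (0, 0)) :
    (∀ z₁ z₂ : ℂ, F (lam * z₁, μ * z₂)
        = (lam * (F (z₁, z₂)).1, μ * (F (z₁, z₂)).2)) ↔
      ∃ a d : ℂ, a * d ≠ 0 ∧
        ∀ z₁ z₂ : ℂ, F (z₁, z₂) = (a * z₁, d * z₂) :=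
  namba_case_3_general lam μ hμ hlamμ hne F Finv hF hleft
end

section
/- Let λ, τ ∈ ℂ with |λ| > 1 and τ ≠ 0, and let G : ℂ² → ℂ² be G(z₁,z₂) = (λz₁ + τz₂, λz₂). A holomorphic automorphism F of ℂ² fixing the origin satisfies F∘G = G∘F if and only if there exist a, b ∈ ℂ with a ≠ 0 such that F(z₁,z₂) = (az₁ + bz₂, az₂) for all (z₁,z₂) ∈ ℂ². (Theorem 3.4, case 4) -/
/-!
If `F` commutes with `G`, so does its linear part `A = DF(0)`, and commuting with the Jordan
block `G` forces `A(z₁, z₂) = (a z₁ + b z₂, a z₂)`, with `a ≠ 0` because `A` is invertible.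
The remainder `h = F - A` also commutes with `G` and vanishes to second order at `0` (Schwarz
lemma), so writing `h = Gⁿ ∘ h ∘ G⁻ⁿ` gives `‖h z‖ ≤ C ‖Gⁿ‖ ‖G⁻ⁿ‖² ‖z‖²`. Since
`G = λ (1 + N)` with `N² = 0`, `‖G^{±n}‖ = O(n |λ|^{±n})`, so the bound tends to `0` and `F = A`.
-/

open Filter Topology Asymptotics Metric

theorem one_add_pow_of_mul_self_eq_zero {R : Type*} [Semiring R] {N : R} (hN : N * N = 0)
    (n : ℕ) : (1 + N) ^ n = 1 + n • N := by
  induction n with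
  | zero => simp
  | succ n ih => rw [pow_succ, ih, succ_nsmul]; noncomm_ring; simp [hN]

theorem smul_one_add_mul_inv_smul_one_sub {𝕜 A : Type*} [Field 𝕜] [Ring A] [Algebra 𝕜 A] {N : A}
    (hN : N * N = 0) {c : 𝕜} (hc : c ≠ 0) : (c • (1 + N)) * (c⁻¹ • (1 - N)) = 1 := by
  rw [smul_mul_smul_comm, mul_inv_cancel₀ hc, one_smul]
  noncomm_ring; simp [hN]

theorem tendsto_one_add_mul_pow_mul_pow_atTop_nhds_zero {K ρ : ℝ} (hK : 0 ≤ K) (hρ₀ : 0 ≤ ρ)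
    (hρ₁ : ρ < 1) (m : ℕ) :
    Tendsto (fun n : ℕ => (1 + n * K) ^ m * ρ ^ n) atTop (𝓝 0) := by
  have hpoly := (tendsto_pow_const_mul_const_pow_of_abs_lt_one m
    (abs_lt.mpr ⟨by linarith, hρ₁⟩)).const_mul ((1 + K) ^ m)
  rw [mul_zero] at hpoly
  refine squeeze_zero' (Eventually.of_forall fun n => by positivity) ?_ hpoly
  filter_upwards [eventually_ge_atTop 1] with n hn
  have hn : (1 : ℝ) ≤ n := by exact_mod_cast hn
  calc (1 + n * K) ^ m * ρ ^ n ≤ ((1 + K) * n) ^ m * ρ ^ n := by gcongr; nlinarith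
    _ = (1 + K) ^ m * (n ^ m * ρ ^ n) := by rw [mul_pow]; ring

section UnipotentGrowth

variable {𝕜 A : Type*} [NormedField 𝕜] [NormedRing A] [NormedAlgebra 𝕜 A] [NormOneClass A]
  {N : A}

theorem norm_smul_one_add_pow_le (hN : N * N = 0) (c : 𝕜) (n : ℕ) :
    ‖(c • (1 + N)) ^ n‖ ≤ (1 + n * ‖N‖) * ‖c‖ ^ n := by
  rw [smul_pow, one_add_pow_of_mul_self_eq_zero hN, norm_smul, norm_pow, mul_comm]
  gcongr
  calc ‖1 + n • N‖ ≤ ‖(1 : A)‖ + ‖n • N‖ := norm_add_le _ _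
    _ ≤ 1 + n * ‖N‖ := by rw [norm_one]; gcongr; exact norm_nsmul_le

variable {c : 𝕜} (hN : N * N = 0) (hc : 1 < ‖c‖)
include hN hc

theorem tendsto_norm_pow_inv_smul_one_sub :
    Tendsto (fun n : ℕ => ‖(c⁻¹ • (1 - N)) ^ n‖) atTop (𝓝 0) := by
  have hN' : (-N) * (-N) = 0 := by rw [neg_mul_neg, hN]
  refine squeeze_zero (fun n => norm_nonneg _) (fun n => ?_)
    ((tendsto_one_add_mul_pow_mul_pow_atTop_nhds_zero (norm_nonneg N) (inv_nonneg.mpr (by linarith))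
      (inv_lt_one_of_one_lt₀ hc) 1))
  simpa [sub_eq_add_neg] using norm_smul_one_add_pow_le hN' c⁻¹ n

theorem tendsto_norm_pow_mul_norm_pow_inv_sq :
    Tendsto (fun n : ℕ => ‖(c • (1 + N)) ^ n‖ * ‖(c⁻¹ • (1 - N)) ^ n‖ ^ 2) atTop (𝓝 0) := by
  have hN' : (-N) * (-N) = 0 := by rw [neg_mul_neg, hN]
  have hc₀ : 0 < ‖c‖ := by linarith
  refine squeeze_zero (fun n => by positivity) (fun n => ?_)
    ((tendsto_one_add_mul_pow_mul_pow_atTop_nhds_zero (norm_nonneg N) (inv_nonneg.mpr hc₀.le)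
      (inv_lt_one_of_one_lt₀ hc) 3))
  have hinv := norm_smul_one_add_pow_le hN' c⁻¹ n
  rw [← sub_eq_add_neg, norm_neg, norm_inv] at hinv
  calc ‖(c • (1 + N)) ^ n‖ * ‖(c⁻¹ • (1 - N)) ^ n‖ ^ 2
      ≤ ((1 + n * ‖N‖) * ‖c‖ ^ n) * ((1 + n * ‖N‖) * ‖c‖⁻¹ ^ n) ^ 2 := by
        gcongr
        exact norm_smul_one_add_pow_le hN c n
    _ = (1 + n * ‖N‖) ^ 3 * (‖c‖ * ‖c‖⁻¹) ^ n * ‖c‖⁻¹ ^ n := by ring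
    _ = (1 + n * ‖N‖) ^ 3 * ‖c‖⁻¹ ^ n := by rw [mul_inv_cancel₀ hc₀.ne', one_pow, mul_one]

end UnipotentGrowth

theorem eq_zero_of_semiconj_of_isBigO_norm_sq {𝕜 E F : Type*} [NontriviallyNormedField 𝕜]
    [NormedAddCommGroup E] [NormedSpace 𝕜 E] [NormedAddCommGroup F] [NormedSpace 𝕜 F]
    {G Ginv : E →L[𝕜] E} {H : F →L[𝕜] F} (hG : G * Ginv = 1)
    (hGinv : Tendsto (fun n : ℕ => ‖Ginv ^ n‖) atTop (𝓝 0))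
    (hHG : Tendsto (fun n : ℕ => ‖H ^ n‖ * ‖Ginv ^ n‖ ^ 2) atTop (𝓝 0))
    {h : E → F} (hh : Function.Semiconj h G H) (hquad : h =O[𝓝 0] fun w => ‖w‖ ^ 2) :
    h = 0 := by
  funext z
  set w : ℕ → E := fun n => (Ginv ^ n) z
  have hw : ∀ n, h z = (H ^ n) (h (w n)) := fun n => by
    have hGw : (G ^ n) (w n) = z := by
      rw [← mul_apply_eq_comp, pow_mul_pow_eq_one n hG, one_apply_eq_self]
    rw [← hGw, pow_apply_eq_iterate, pow_apply_eq_iterate, (hh.iterate_right n).eq]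
  have hw_le : ∀ n, ‖w n‖ ≤ ‖Ginv ^ n‖ * ‖z‖ := fun n => (Ginv ^ n).le_opNorm z
  have hw0 : Tendsto w atTop (𝓝 0) := by
    rw [tendsto_zero_iff_norm_tendsto_zero]
    refine squeeze_zero (fun n => norm_nonneg _) hw_le ?_
    simpa using hGinv.mul_const ‖z‖
  obtain ⟨C, hC, hCw⟩ := (hquad.comp_tendsto hw0).exists_pos
  have hbound : ∀ᶠ n in atTop, ‖h z‖ ≤ C * ‖z‖ ^ 2 * (‖H ^ n‖ * ‖Ginv ^ n‖ ^ 2) := by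
    filter_upwards [hCw.bound] with n hn
    rw [hw n]
    simp only [Function.comp_apply, norm_pow, norm_norm] at hn
    calc ‖(H ^ n) (h (w n))‖ ≤ ‖H ^ n‖ * (C * ‖w n‖ ^ 2) :=
          ((H ^ n).le_opNorm _).trans (by gcongr)
      _ ≤ ‖H ^ n‖ * (C * (‖Ginv ^ n‖ * ‖z‖) ^ 2) := by gcongr; exact hw_le n
      _ = C * ‖z‖ ^ 2 * (‖H ^ n‖ * ‖Ginv ^ n‖ ^ 2) := by ring
  have hlim := hHG.const_mul (C * ‖z‖ ^ 2)
  rw [mul_zero] at hlim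
  exact norm_le_zero_iff.mp (ge_of_tendsto hlim hbound)

theorem isBigO_sub_norm_sq_of_hasFDerivAt_zero {E F : Type*} [NormedAddCommGroup E]
    [NormedSpace ℂ E] [NormedAddCommGroup F] [NormedSpace ℂ F] {f : E → F} {c : E}
    (hf : ∀ᶠ z in 𝓝 c, DifferentiableAt ℂ f z) (hf' : HasFDerivAt f (0 : E →L[ℂ] F) c) :
    (fun z => f z - f c) =O[𝓝 c] fun z => ‖z - c‖ ^ 2 := by
  have hnear : ∀ᶠ z in 𝓝 c, DifferentiableAt ℂ f z ∧ dist (f z) (f c) < 1 :=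
    hf.and (hf'.continuousAt.eventually (ball_mem_nhds (f c) one_pos))
  obtain ⟨ε, hε, hball⟩ := Metric.eventually_nhds_iff_ball.mp hnear
  have hlin : (f · - f c) =o[𝓝 c] fun z => ‖z - c‖ ^ 1 := by
    simpa using hf'.isLittleO.norm_right
  refine IsBigO.of_bound (1 / ε ^ 2) ?_
  filter_upwards [ball_mem_nhds c hε] with z hz
  have := Complex.dist_le_mul_div_pow_of_mapsTo_ball_of_isLittleO
    (fun w hw => (hball w hw).1.differentiableWithinAt)
    (fun w hw => ball_subset_closedBall (mem_ball.mpr (hball w hw).2)) hlin hz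
  rw [dist_eq_norm, dist_eq_norm] at this
  rw [norm_pow, norm_norm]
  calc ‖f z - f c‖ ≤ 1 * (‖z - c‖ / ε) ^ (1 + 1) := this
    _ = 1 / ε ^ 2 * ‖z - c‖ ^ 2 := by ring

section Derivative

variable {𝕜 E : Type*} [NontriviallyNormedField 𝕜] [NormedAddCommGroup E] [NormedSpace 𝕜 E]

theorem fderiv_commute_of_semiconj {F : E → E} {G : E →L[𝕜] E} (hF : DifferentiableAt 𝕜 F 0)
    (hF0 : F 0 = 0) (hFG : Function.Semiconj F G G) : Commute (fderiv 𝕜 F 0) G := by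
  have hF' : DifferentiableAt 𝕜 F (G 0) := by rwa [map_zero]
  have h := fderiv_comp (0 : E) hF' G.differentiableAt
  rw [hFG.comp_eq, fderiv_comp (0 : E) G.differentiableAt hF, hF0, map_zero, G.fderiv] at h
  exact h.symm

theorem fderiv_mul_fderiv_of_rightInverse {F Finv : E → E} {x : E}
    (hF : DifferentiableAt 𝕜 F (Finv x)) (hFinv : DifferentiableAt 𝕜 Finv x)
    (h : Function.RightInverse Finv F) : fderiv 𝕜 F (Finv x) * fderiv 𝕜 Finv x = 1 := by
  rw [ContinuousLinearMap.mul_def, ← fderiv_comp x hF hFinv, h.comp_eq_id, fderiv_id]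
  rfl

end Derivative

section Shift

variable {𝕜 : Type*} [NontriviallyNormedField 𝕜]

variable (𝕜) in
def shiftCLM : 𝕜 × 𝕜 →L[𝕜] 𝕜 × 𝕜 :=
  (ContinuousLinearMap.inl 𝕜 𝕜 𝕜).comp (ContinuousLinearMap.snd 𝕜 𝕜 𝕜)

@[simp]
theorem shiftCLM_apply (z : 𝕜 × 𝕜) : shiftCLM 𝕜 z = (z.2, 0) := rfl

theorem smul_shiftCLM_mul_self (c : 𝕜) : (c • shiftCLM 𝕜) * (c • shiftCLM 𝕜) = 0 := by
  ext <;> simp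

def jordanBlock (lam τ : 𝕜) : 𝕜 × 𝕜 →L[𝕜] 𝕜 × 𝕜 := lam • 1 + τ • shiftCLM 𝕜

@[simp]
theorem jordanBlock_apply (lam τ : 𝕜) (z : 𝕜 × 𝕜) :
    jordanBlock lam τ z = (lam * z.1 + τ * z.2, lam * z.2) := by
  ext <;> simp [jordanBlock]

theorem jordanBlock_eq_smul {lam : 𝕜} (hlam : lam ≠ 0) (τ : 𝕜) :
    jordanBlock lam τ = lam • (1 + (τ / lam) • shiftCLM 𝕜) := by
  rw [jordanBlock, smul_add, smul_smul, mul_div_cancel₀ τ hlam]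

theorem exists_eq_of_commute_jordanBlock {lam τ : 𝕜} (hτ : τ ≠ 0) {A : 𝕜 × 𝕜 →L[𝕜] 𝕜 × 𝕜}
    (hA : Commute A (jordanBlock lam τ)) :
    ∃ a b : 𝕜, ∀ z : 𝕜 × 𝕜, A z = (a * z.1 + b * z.2, a * z.2) := by
  have hA_basis : ∀ z : 𝕜 × 𝕜, A z = z.1 • A (1, 0) + z.2 • A (0, 1) := fun z => by
    rw [← map_smul, ← map_smul, ← map_add]
    simp
  have hc : (A (1, 0)).2 = 0 := by
    simpa [hA_basis (lam, 0), hτ] using congr(($(hA.eq) (1, 0)).1)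
  have hd : (A (0, 1)).2 = (A (1, 0)).1 := by
    have h := congr(($(hA.eq) (0, 1)).1)
    simp only [mul_apply_eq_comp, jordanBlock_apply, mul_zero, mul_one, zero_add] at h
    rw [hA_basis (τ, lam)] at h
    simp only [Prod.fst_add, Prod.smul_fst, smul_eq_mul] at h
    exact mul_left_cancel₀ hτ (by linear_combination -h)
  refine ⟨(A (1, 0)).1, (A (0, 1)).1, fun z => ?_⟩
  rw [hA_basis z]
  ext <;> simp [hc, hd] <;> ring

end Shift

theorem eq_fderiv_of_semiconj_smul_one_add {E : Type*} [NormedAddCommGroup E] [NormedSpace ℂ E]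
    [Nontrivial E] {F : E → E} (hF : ∀ᶠ z in 𝓝 0, DifferentiableAt ℂ F z) (hF0 : F 0 = 0)
    {c : ℂ} (hc : 1 < ‖c‖) {N : E →L[ℂ] E} (hN : N * N = 0)
    (hFG : Function.Semiconj F ⇑(c • (1 + N)) ⇑(c • (1 + N))) (z : E) :
    F z = fderiv ℂ F 0 z := by
  set A := fderiv ℂ F 0
  have hA : Commute A (c • (1 + N)) := fderiv_commute_of_semiconj hF.self_of_nhds hF0 hFG
  set h : E → E := fun w => F w - A w
  have hh : Function.Semiconj h ⇑(c • (1 + N)) ⇑(c • (1 + N)) := fun w => by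
    simp only [h, hFG w, map_sub, ← mul_apply_eq_comp, hA.eq]
  have hh' : HasFDerivAt h (0 : E →L[ℂ] E) 0 :=
    (hF.self_of_nhds.hasFDerivAt.sub A.hasFDerivAt).congr_fderiv (sub_self A)
  have hquad : h =O[𝓝 0] fun w => ‖w‖ ^ 2 := by
    simpa [h, hF0] using isBigO_sub_norm_sq_of_hasFDerivAt_zero
      (hF.mono fun w hw => hw.sub A.differentiableAt) hh'
  have hc₀ : c ≠ 0 := norm_pos_iff.mp (one_pos.trans hc)
  have := eq_zero_of_semiconj_of_isBigO_norm_sq (smul_one_add_mul_inv_smul_one_sub hN hc₀)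
    (tendsto_norm_pow_inv_smul_one_sub hN hc) (tendsto_norm_pow_mul_norm_pow_inv_sq hN hc) hh hquad
  exact sub_eq_zero.mp (congr_fun this z)

/-- Theorem 3.4, case 4: for `G(z₁,z₂) = (λz₁ + τz₂, λz₂)` with `|λ| > 1` and
`τ ≠ 0`, a holomorphic automorphism `F` of `ℂ²` fixing the origin commutes with
`G` iff `F(z₁,z₂) = (az₁ + bz₂, az₂)` with `a ≠ 0`. -/
theorem namba_case_4 (lam τ : ℂ) (hlam : 1 < ‖lam‖) (hτ : τ ≠ 0)
    (F Finv : ℂ × ℂ → ℂ × ℂ)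
    (hF : Differentiable ℂ F) (hFinv : Differentiable ℂ Finv)
    (hleft : Function.LeftInverse Finv F)
    (hright : Function.RightInverse Finv F)
    (hF0 : F (0, 0) = (0, 0)) :
    (∀ z₁ z₂ : ℂ, F (lam * z₁ + τ * z₂, lam * z₂)
        = (lam * (F (z₁, z₂)).1 + τ * (F (z₁, z₂)).2, lam * (F (z₁, z₂)).2)) ↔
      ∃ a b : ℂ, a ≠ 0 ∧
        ∀ z₁ z₂ : ℂ, F (z₁, z₂) = (a * z₁ + b * z₂, a * z₂) := by
  have hF0' : F 0 = 0 := hF0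
  constructor
  · intro hcomm
    have hFG : Function.Semiconj F (jordanBlock lam τ) (jordanBlock lam τ) := fun z => by
      simpa using hcomm z.1 z.2
    obtain ⟨a, b, hA⟩ :=
      exists_eq_of_commute_jordanBlock hτ (fderiv_commute_of_semiconj (hF 0) hF0' hFG)
    have hFinv0 : Finv 0 = 0 := by simpa [hF0'] using hleft 0
    have hAB := fderiv_mul_fderiv_of_rightInverse (hF _) (hFinv 0) hright
    rw [hFinv0] at hAB
    refine ⟨a, b, fun ha => ?_, fun z₁ z₂ => ?_⟩
    · simpa [hA, ha] using congr(($hAB (0, 1)).2)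
    · rw [jordanBlock_eq_smul (norm_pos_iff.mp (one_pos.trans hlam))] at hFG
      rw [eq_fderiv_of_semiconj_smul_one_add (.of_forall hF) hF0' hlam (smul_shiftCLM_mul_self _)
        hFG, hA]
  · rintro ⟨a, b, -, hab⟩ z₁ z₂
    simp only [hab, Prod.ext_iff]
    constructor <;> ring
end

section
/- Let μ, τ ∈ ℂ with |μ| > 1 and τ ≠ 0, let p ≥ 2 be an integer, and let G : ℂ² → ℂ² be G(z₁,z₂) = (μᵖz₁ + τ·z₂ᵖ, μz₂). A holomorphic automorphism F of ℂ² fixing the origin satisfies F∘G = G∘F if and only if there exist a, b ∈ ℂ with a ≠ 0 such that F(z₁,z₂) = (aᵖz₁ + b·z₂ᵖ, az₂) for all (z₁,z₂) ∈ ℂ². (Theorem 3.4, case 5) -/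
/-!
Write `G` for the resonant map and `F = (f, g)`. Differentiating `F ∘ G = G ∘ F` `k` times in
`z₁` gives `μ^(pk) · ∂₁ᵏφ ∘ G = c · ∂₁ᵏφ` for `(φ, k, c) = (g, 1, μ)` and `(f, 2, μᵖ)`, with
`‖c‖ < ‖μ‖^(pk)` in both cases. Backward `G`-orbits tend to `0` and Cauchy's estimate bounds
`∂₁ᵏφ` near `0`, so `∂₁g = 0` and `∂₁²f = 0`: `g = g(z₂)` and `f = α(z₂) + β(z₂) z₁`. Each of
`g`, `β`, `α` then solves an entire one-variable equation `ρ(μs) = μᵐ ρ(s) + c sᵐ`, and comparing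
Taylor coefficients at `0` gives `c = 0` and `ρ = C sᵐ`; for `α` this `c` is `τ (aᵖ - β)`.
-/

open Filter Topology Metric Set

theorem eq_zero_of_eq_smul_comp_of_tendsto_iterate {X 𝕜 E : Type*} [TopologicalSpace X]
    [NormedField 𝕜] [NormedAddCommGroup E] [NormedSpace 𝕜 E] {T : X → X} {x₀ : X}
    (hT : ∀ x, Tendsto (fun n => T^[n] x) atTop (𝓝 x₀)) {h : X → E}
    (hbdd : IsBoundedUnder (· ≤ ·) (𝓝 x₀) (fun x => ‖h x‖)) {c : 𝕜} (hc : ‖c‖ < 1)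
    (hh : ∀ x, h x = c • h (T x)) (x : X) : h x = 0 := by
  have hiter : ∀ n : ℕ, h x = c ^ n • h (T^[n] x) := by
    intro n
    induction n with
    | zero => simp
    | succ n ih => rw [ih, hh, smul_smul, Function.iterate_succ_apply', pow_succ]
  have hlim : Tendsto (fun n : ℕ => c ^ n • h (T^[n] x)) atTop (𝓝 0) :=
    (tendsto_pow_atTop_nhds_zero_of_norm_lt_one hc).zero_smul_isBoundedUnder_le
      ((hT x).isBoundedUnder_comp hbdd)
  simp only [← hiter] at hlim
  exact tendsto_nhds_unique tendsto_const_nhds hlim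

noncomputable def iteratedDerivFst {E : Type*} [NormedAddCommGroup E] [NormedSpace ℂ E] (k : ℕ)
    (φ : ℂ × ℂ → E) (z : ℂ × ℂ) : E :=
  iteratedDeriv k (fun u => φ (u, z.2)) z.1

theorem isBoundedUnder_norm_iteratedDerivFst {E : Type*} [NormedAddCommGroup E]
    [NormedSpace ℂ E] [CompleteSpace E] {φ : ℂ × ℂ → E} (hφ : Differentiable ℂ φ) (k : ℕ)
    (z₀ : ℂ × ℂ) : IsBoundedUnder (· ≤ ·) (𝓝 z₀) (fun z => ‖iteratedDerivFst k φ z‖) := by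
  obtain ⟨M, hM⟩ := (isCompact_closedBall z₀ 2).exists_bound_of_continuousOn
    hφ.continuous.continuousOn
  refine isBoundedUnder_of_eventually_le (a := k.factorial * M) ?_
  filter_upwards [closedBall_mem_nhds z₀ one_pos] with z hz
  have hslice : Differentiable ℂ (fun u => φ (u, z.2)) := by fun_prop
  have hsphere : ∀ u ∈ sphere z.1 1, ‖φ (u, z.2)‖ ≤ M := fun u hu => hM _ <| by
    rw [mem_closedBall] at hz ⊢
    calc dist (u, z.2) z₀ ≤ dist (u, z.2) z + dist z z₀ := dist_triangle _ _ _
      _ ≤ 1 + 1 := by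
        gcongr
        simp [Prod.dist_eq, mem_sphere.mp hu]
      _ = 2 := by norm_num
  simpa [iteratedDerivFst] using
    Complex.norm_iteratedDeriv_le_of_forall_mem_sphere_norm_le k one_pos hslice.diffContOnCl hsphere

theorem Differentiable.eq_sum_of_iteratedDeriv_eq_zero {r : ℂ → ℂ} (hr : Differentiable ℂ r)
    {k : ℕ} (hk : iteratedDeriv k r = 0) (z : ℂ) :
    r z = ∑ j ∈ Finset.range k, (j.factorial : ℂ)⁻¹ * iteratedDeriv j r 0 * z ^ j := by
  have hvanish : ∀ j ∉ Finset.range k, (j.factorial : ℂ)⁻¹ * iteratedDeriv j r 0 * z ^ j = 0 := by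
    intro j hj
    obtain ⟨i, rfl⟩ := Nat.exists_eq_add_of_le' (not_lt.mp (Finset.mem_range.not.mp hj))
    rw [iteratedDeriv_eq_iterate, Function.iterate_add_apply, ← iteratedDeriv_eq_iterate (f := r),
      hk, ← iteratedDeriv_eq_iterate, Pi.zero_def, iteratedDeriv_const]
    simp
  simpa [tsum_eq_sum hvanish] using (Complex.taylorSeries_eq_of_entire' (c := 0) (z := z) hr).symm

theorem eq_of_iteratedDerivFst_one_eq_zero {φ : ℂ × ℂ → ℂ} (hφ : Differentiable ℂ φ)
    (h : ∀ z, iteratedDerivFst 1 φ z = 0) (x y : ℂ) : φ (x, y) = φ (0, y) := by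
  have hslice : Differentiable ℂ (fun u => φ (u, y)) := by fun_prop
  simpa using hslice.eq_sum_of_iteratedDeriv_eq_zero (funext fun u => h (u, y)) x

theorem eq_add_mul_of_iteratedDerivFst_two_eq_zero {φ : ℂ × ℂ → ℂ} (hφ : Differentiable ℂ φ)
    (h : ∀ z, iteratedDerivFst 2 φ z = 0) (x y : ℂ) :
    φ (x, y) = φ (0, y) + (φ (1, y) - φ (0, y)) * x := by
  have hslice : Differentiable ℂ (fun u => φ (u, y)) := by fun_prop
  have htaylor := hslice.eq_sum_of_iteratedDeriv_eq_zero (funext fun u => h (u, y))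
  simp only [Finset.sum_range_succ, Finset.sum_range_zero] at htaylor
  rw [htaylor x, htaylor 1, htaylor 0]
  simp

theorem Differentiable.eq_mul_pow_of_comp_mul_eq {μ : ℂ} (hμ : 1 < ‖μ‖) {m : ℕ} {c : ℂ}
    {ρ : ℂ → ℂ} (hρ : Differentiable ℂ ρ) (heq : ∀ s, ρ (μ * s) = μ ^ m * ρ s + c * s ^ m) :
    c = 0 ∧ ∃ C, ∀ s, ρ s = C * s ^ m := by
  have hcoeff : ∀ k : ℕ, μ ^ k * iteratedDeriv k ρ 0 =
      μ ^ m * iteratedDeriv k ρ 0 + c * (if k = m then (m.factorial : ℂ) else 0) := by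
    intro k
    have h := congrArg (iteratedDeriv k · 0) (funext heq)
    simp only [iteratedDeriv_comp_const_mul hρ.contDiff, mul_zero] at h
    rw [h, iteratedDeriv_fun_add (contDiffAt_const.mul hρ.contDiff.contDiffAt) (by fun_prop),
      iteratedDeriv_const_mul_field, iteratedDeriv_const_mul_field, iteratedDeriv_fun_pow_zero,
      Nat.cast_ite, Nat.cast_zero]
  have hpow : ∀ k, μ ^ k = μ ^ m → k = m := fun k h =>
    pow_right_injective₀ (one_pos.trans hμ) hμ.ne' (by simpa using congrArg (‖·‖) h)
  have hc : c = 0 := by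
    have h := hcoeff m
    rw [if_pos rfl, left_eq_add, mul_eq_zero] at h
    exact h.resolve_right (Nat.cast_ne_zero.mpr m.factorial_ne_zero)
  have hvanish : ∀ k ≠ m, iteratedDeriv k ρ 0 = 0 := fun k hk => by
    have h := hcoeff k
    rw [if_neg hk, mul_zero, add_zero] at h
    exact (mul_eq_mul_right_iff.mp h).resolve_left (mt (hpow k) hk)
  refine ⟨hc, (m.factorial : ℂ)⁻¹ * iteratedDeriv m ρ 0, fun s => ?_⟩
  rw [← Complex.taylorSeries_eq_of_entire' (c := 0) (z := s) hρ, tsum_eq_single m fun k hk => by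
    rw [hvanish k hk, mul_zero, zero_mul], sub_zero]

def resonantMap (μ τ : ℂ) (p : ℕ) (z : ℂ × ℂ) : ℂ × ℂ :=
  (μ ^ p * z.1 + τ * z.2 ^ p, μ * z.2)

noncomputable def resonantMapInv (μ τ : ℂ) (p : ℕ) (z : ℂ × ℂ) : ℂ × ℂ :=
  (μ⁻¹ ^ p * (z.1 - τ * (μ⁻¹ * z.2) ^ p), μ⁻¹ * z.2)

section resonantMap

variable {μ τ : ℂ} {p : ℕ}

theorem resonantMap_resonantMapInv (hμ : μ ≠ 0) (z : ℂ × ℂ) :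
    resonantMap μ τ p (resonantMapInv μ τ p z) = z := by
  simp [resonantMap, resonantMapInv, ← mul_assoc, mul_inv_cancel₀ hμ,
    mul_inv_cancel₀ (pow_ne_zero p hμ)]

theorem resonantMapInv_iterate (n : ℕ) (z : ℂ × ℂ) : (resonantMapInv μ τ p)^[n] z =
    (μ⁻¹ ^ (p * n) * (z.1 - n * τ * μ⁻¹ ^ p * z.2 ^ p), μ⁻¹ ^ n * z.2) := by
  induction n with
  | zero => simp
  | succ n ih =>
    rw [Function.iterate_succ_apply', ih, resonantMapInv]
    push_cast
    rw [mul_add, mul_one, pow_add, pow_succ]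
    ext <;> ring

theorem tendsto_resonantMapInv_iterate (hμ : 1 < ‖μ‖) (hp : p ≠ 0) (z : ℂ × ℂ) :
    Tendsto (fun n => (resonantMapInv μ τ p)^[n] z) atTop (𝓝 0) := by
  have hν : ‖μ⁻¹‖ < 1 := by rw [norm_inv]; exact inv_lt_one_of_one_lt₀ hμ
  have hνp : ‖μ⁻¹ ^ p‖ < 1 := by rw [norm_pow]; exact pow_lt_one₀ (norm_nonneg _) hν hp
  have hgeom := tendsto_pow_atTop_nhds_zero_of_norm_lt_one hνp
  have hlin : Tendsto (fun n : ℕ => (n : ℂ) * (μ⁻¹ ^ p) ^ n) atTop (𝓝 0) :=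
    squeeze_zero_norm (fun n => by simp)
      (tendsto_self_mul_const_pow_of_lt_one (norm_nonneg _) hνp)
  simp only [resonantMapInv_iterate, pow_mul]
  rw [← Prod.mk_zero_zero]
  refine Tendsto.prodMk_nhds ?_ ?_
  · convert (hgeom.mul_const z.1).sub (hlin.mul_const (τ * μ⁻¹ ^ p * z.2 ^ p)) using 2 <;> ring
  · simpa using (tendsto_pow_atTop_nhds_zero_of_norm_lt_one hν).mul_const z.2

theorem iteratedDerivFst_resonantMap {φ : ℂ × ℂ → ℂ} (hφ : Differentiable ℂ φ) {k : ℕ}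
    (hk : k ≠ 0) {c : ℂ} {ψ : ℂ → ℂ} (hfe : ∀ z, φ (resonantMap μ τ p z) = c * φ z + ψ z.2)
    (z : ℂ × ℂ) :
    μ ^ (p * k) * iteratedDerivFst k φ (resonantMap μ τ p z) = c * iteratedDerivFst k φ z := by
  have hshift : ContDiff ℂ k (fun v => φ (v + τ * z.2 ^ p, μ * z.2)) :=
    (by fun_prop : Differentiable ℂ (fun v => φ (v + τ * z.2 ^ p, μ * z.2))).contDiff
  have hlhs : iteratedDeriv k (fun u => φ (resonantMap μ τ p (u, z.2))) z.1 =
      μ ^ (p * k) * iteratedDerivFst k φ (resonantMap μ τ p z) := by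
    change iteratedDeriv k (fun u => (fun v => φ (v + τ * z.2 ^ p, μ * z.2)) (μ ^ p * u)) z.1 = _
    rw [iteratedDeriv_comp_const_mul hshift,
      iteratedDeriv_comp_add_const k (fun v => φ (v, μ * z.2)), pow_mul]
    rfl
  have hrhs : iteratedDeriv k (fun u => c * φ (u, z.2) + ψ z.2) z.1 =
      c * iteratedDerivFst k φ z := by
    simp only [add_comm _ (ψ z.2)]
    rw [iteratedDeriv_const_add (Nat.pos_of_ne_zero hk), iteratedDeriv_const_mul_field]
    rfl
  rw [← hlhs, ← hrhs]
  exact congrArg (iteratedDeriv k · z.1) (funext fun u => hfe (u, z.2))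

theorem iteratedDerivFst_eq_zero_of_resonantMap (hμ : 1 < ‖μ‖) (hp : p ≠ 0) {φ : ℂ × ℂ → ℂ}
    (hφ : Differentiable ℂ φ) {k : ℕ} (hk : k ≠ 0) {c : ℂ} (hc : ‖c‖ < ‖μ‖ ^ (p * k))
    {ψ : ℂ → ℂ} (hfe : ∀ z, φ (resonantMap μ τ p z) = c * φ z + ψ z.2) (z : ℂ × ℂ) :
    iteratedDerivFst k φ z = 0 := by
  have hμk : μ ^ (p * k) ≠ 0 := pow_ne_zero _ (norm_pos_iff.mp (one_pos.trans hμ))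
  refine eq_zero_of_eq_smul_comp_of_tendsto_iterate (tendsto_resonantMapInv_iterate (τ := τ) hμ hp)
    (isBoundedUnder_norm_iteratedDerivFst hφ k 0) (c := c / μ ^ (p * k)) ?_ (fun w => ?_) z
  · rwa [norm_div, norm_pow, div_lt_one (by positivity)]
  · have h := iteratedDerivFst_resonantMap hφ hk hfe (resonantMapInv μ τ p w)
    rw [resonantMap_resonantMapInv (norm_pos_iff.mp (one_pos.trans hμ))] at h
    rw [smul_eq_mul, div_mul_eq_mul_div, ← h, mul_div_cancel_left₀ _ hμk]

theorem exists_eq_mul_snd_of_comp_resonantMap (hμ : 1 < ‖μ‖) (hp : 2 ≤ p) {g : ℂ × ℂ → ℂ}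
    (hg : Differentiable ℂ g) (hfe : ∀ z, g (resonantMap μ τ p z) = μ * g z) :
    ∃ a, ∀ z, g z = a * z.2 := by
  have hc : ‖μ‖ < ‖μ‖ ^ (p * 1) := by
    simpa using pow_lt_pow_right₀ hμ (by omega : 1 < p)
  have hindep := eq_of_iteratedDerivFst_one_eq_zero hg
    (iteratedDerivFst_eq_zero_of_resonantMap hμ (by omega) hg one_ne_zero hc (ψ := 0)
      (by simpa using hfe))
  have hscale : ∀ y, g (0, μ * y) = μ ^ 1 * g (0, y) + 0 * y ^ 1 := fun y => by
    rw [← hindep (μ ^ p * 0 + τ * y ^ p), ← hindep 0 y]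
    simpa [resonantMap] using hfe (0, y)
  obtain ⟨-, a, ha⟩ := (by fun_prop : Differentiable ℂ fun y => g (0, y)).eq_mul_pow_of_comp_mul_eq
    hμ hscale
  exact ⟨a, fun z => by simpa [← hindep z.1 z.2] using ha z.2⟩

theorem exists_eq_add_mul_pow_of_comp_resonantMap (hμ : 1 < ‖μ‖) (hp : p ≠ 0) (hτ : τ ≠ 0)
    {f : ℂ × ℂ → ℂ} (hf : Differentiable ℂ f) {e : ℂ}
    (hfe : ∀ z, f (resonantMap μ τ p z) = μ ^ p * f z + τ * e * z.2 ^ p) :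
    ∃ b, ∀ z, f z = e * z.1 + b * z.2 ^ p := by
  have hc : ‖μ ^ p‖ < ‖μ‖ ^ (p * 2) := by
    rw [norm_pow]
    exact pow_lt_pow_right₀ hμ (by omega)
  have haff := eq_add_mul_of_iteratedDerivFst_two_eq_zero hf
    (iteratedDerivFst_eq_zero_of_resonantMap hμ hp hf two_ne_zero hc
      (ψ := fun y => τ * e * y ^ p) hfe)
  set β : ℂ → ℂ := fun y => f (1, y) - f (0, y)
  have haffG : ∀ x y, f (resonantMap μ τ p (x, y)) =
      f (0, μ * y) + β (μ * y) * (μ ^ p * x + τ * y ^ p) := fun x y => haff _ _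
  have hβ_scale : ∀ y, β (μ * y) = μ ^ 0 * β y + 0 * y ^ 0 := fun y => by
    have h := (haffG 1 y).symm.trans (hfe (1, y))
    have h' := (haffG 0 y).symm.trans (hfe (0, y))
    have hμp : μ ^ p ≠ 0 := pow_ne_zero _ (norm_pos_iff.mp (one_pos.trans hμ))
    apply mul_left_cancel₀ hμp
    linear_combination h - h'
  obtain ⟨-, β₀, hβ⟩ := (by fun_prop : Differentiable ℂ β).eq_mul_pow_of_comp_mul_eq hμ hβ_scale
  have hα_scale : ∀ y, f (0, μ * y) = μ ^ p * f (0, y) + τ * (e - β₀) * y ^ p := fun y => by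
    have h := (haffG 0 y).symm.trans (hfe (0, y))
    simp only [hβ, pow_zero, mul_one] at h
    linear_combination h
  obtain ⟨hcoeff, b, hb⟩ :=
    (by fun_prop : Differentiable ℂ fun y => f (0, y)).eq_mul_pow_of_comp_mul_eq hμ hα_scale
  have he : β₀ = e := by simpa [hτ, sub_eq_zero, eq_comm] using hcoeff
  refine ⟨b, fun z => ?_⟩
  have h : f z = f (0, z.2) + β z.2 * z.1 := haff z.1 z.2
  rw [h, hb, hβ, he]
  ring

end resonantMap

theorem namba_case_5_general (μ τ : ℂ) (hμ : 1 < ‖μ‖) (hτ : τ ≠ 0)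
    (p : ℕ) (hp : 2 ≤ p)
    (F Finv : ℂ × ℂ → ℂ × ℂ)
    (hF : Differentiable ℂ F)
    (hleft : Function.LeftInverse Finv F) :
    (∀ z₁ z₂ : ℂ, F (μ ^ p * z₁ + τ * z₂ ^ p, μ * z₂)
        = (μ ^ p * (F (z₁, z₂)).1 + τ * ((F (z₁, z₂)).2) ^ p,
            μ * (F (z₁, z₂)).2)) ↔
      ∃ a b : ℂ, a ≠ 0 ∧
        ∀ z₁ z₂ : ℂ, F (z₁, z₂) = (a ^ p * z₁ + b * z₂ ^ p, a * z₂) := by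
  constructor
  · intro hcomm
    have hG : ∀ z, F (resonantMap μ τ p z) = resonantMap μ τ p (F z) := fun z => hcomm z.1 z.2
    obtain ⟨a, ha⟩ := exists_eq_mul_snd_of_comp_resonantMap hμ hp hF.snd
      fun z => congrArg Prod.snd (hG z)
    obtain ⟨b, hb⟩ := exists_eq_add_mul_pow_of_comp_resonantMap hμ (by omega : p ≠ 0) hτ hF.fst
      (e := a ^ p) fun z => by rw [hG]; simp only [resonantMap, ha]; ring
    have hform : ∀ z₁ z₂, F (z₁, z₂) = (a ^ p * z₁ + b * z₂ ^ p, a * z₂) :=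
      fun z₁ z₂ => Prod.ext (hb _) (ha _)
    refine ⟨a, b, fun ha0 => ?_, hform⟩
    have h10 : ((1, 0) : ℂ × ℂ) = (0, 0) :=
      hleft.injective (by simp [hform, ha0, zero_pow (by omega : p ≠ 0)])
    simp at h10
  · rintro ⟨a, b, -, hform⟩ z₁ z₂
    simp only [hform, Prod.mk.injEq]
    constructor <;> ring

/-- Theorem 3.4, case 5: for `G(z₁,z₂) = (μᵖz₁ + τ·z₂ᵖ, μz₂)` with `|μ| > 1`,
`τ ≠ 0` and `p ≥ 2`, a holomorphic automorphism `F` of `ℂ²` fixing the origin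
commutes with `G` iff `F(z₁,z₂) = (aᵖz₁ + b·z₂ᵖ, az₂)` with `a ≠ 0`. -/
theorem namba_case_5 (μ τ : ℂ) (hμ : 1 < ‖μ‖) (hτ : τ ≠ 0)
    (p : ℕ) (hp : 2 ≤ p)
    (F Finv : ℂ × ℂ → ℂ × ℂ)
    (hF : Differentiable ℂ F) (hFinv : Differentiable ℂ Finv)
    (hleft : Function.LeftInverse Finv F)
    (hright : Function.RightInverse Finv F)
    (hF0 : F (0, 0) = (0, 0)) :
    (∀ z₁ z₂ : ℂ, F (μ ^ p * z₁ + τ * z₂ ^ p, μ * z₂)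
        = (μ ^ p * (F (z₁, z₂)).1 + τ * ((F (z₁, z₂)).2) ^ p,
            μ * (F (z₁, z₂)).2)) ↔
      ∃ a b : ℂ, a ≠ 0 ∧
        ∀ z₁ z₂ : ℂ, F (z₁, z₂) = (a ^ p * z₁ + b * z₂ ^ p, a * z₂) :=
  namba_case_5_general μ τ hμ hτ p hp F Finv hF hleft
end

section
/- Let λ ∈ ℂ with |λ| > 1. Suppose ξ₁, ξ₂ : ℂ² × [0,∞) → ℂ are as in the context and satisfy ξ₁(λz₁, λz₂, φ(x)) = λ·ξ₁(z₁,z₂,x) and ξ₂(λz₁, λz₂, φ(x)) = λ·ξ₂(z₁,z₂,x) for all (z₁,z₂) ∈ ℂ² and x ≥ 0. Then there exist continuous functions a₁, a₂ : [0,∞) → ℂ with a₁(0) = a₂(0) = 0 and aⱼ(φ(x)) = λ·aⱼ(x) (j = 1,2) such that ξ₁(z₁,z₂,x) = z₁ + a₁(x) and ξ₂(z₁,z₂,x) = z₂ + a₂(x) for all (z₁,z₂,x). (Classification in Case 1 of Section 3.2, underlying Theorem 3.9) -/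
/-!
For fixed `x`, equivariance gives `ξ(v, x) = λⁿ ξ(λ⁻ⁿ v, yₙ)` along the backward orbit
`yₙ = φ⁻ⁿ(x) ∈ [0, x]`, so by compactness every slice `ξ(·, x)` is an entire function of linear
growth, hence affine: `ξ(v, x) = ξ(0, x) + Lₓ v`. Comparing linear parts in the equivariance
identity gives `L_{φ x} = Lₓ`; as the backward orbit tends to `0` and `x ↦ Lₓ v` is continuous,
`Lₓ = L₀`, which the boundary condition makes the identity.
-/

open Set Filter Topology Function

section LinearGrowth

variable {E F : Type*} [NormedAddCommGroup E] [NormedSpace ℂ E]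
  [NormedAddCommGroup F] [NormedSpace ℂ F] [CompleteSpace F]

/-- `dslope f 0` is entire and bounded, hence constant by Liouville. -/
theorem Differentiable.eq_add_smul_deriv_of_norm_le {f : ℂ → F} (hf : Differentiable ℂ f)
    {C : ℝ} (hC : ∀ z, ‖f z‖ ≤ C * (1 + ‖z‖)) (z : ℂ) : f z = f 0 + z • _root_.deriv f 0 := by
  have hC0 : 0 ≤ C := by simpa using (norm_nonneg _).trans (hC 0)
  have hg : Differentiable ℂ (dslope f 0) := by
    rw [← differentiableOn_univ] at hf ⊢
    exact (Complex.differentiableOn_dslope univ_mem).2 hf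
  obtain ⟨K, hK⟩ := (isCompact_closedBall (0 : ℂ) 1).exists_bound_of_continuousOn
    hg.continuous.continuousOn
  have hbdd : ∀ w, ‖dslope f 0 w‖ ≤ max K (2 * C + ‖f 0‖) := by
    intro w
    rcases le_or_gt ‖w‖ 1 with hw | hw
    · exact le_max_of_le_left (hK w (mem_closedBall_zero_iff.2 hw))
    · have hw0 : w ≠ 0 := norm_pos_iff.1 (one_pos.trans hw)
      rw [dslope_of_ne _ hw0, slope_def_module, sub_zero, norm_smul, norm_inv,
        inv_mul_le_iff₀ (one_pos.trans hw)]
      calc ‖f w - f 0‖ ≤ ‖f w‖ + ‖f 0‖ := norm_sub_le _ _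
        _ ≤ ‖w‖ * (2 * C + ‖f 0‖) := by nlinarith [hC w, norm_nonneg (f 0)]
        _ ≤ ‖w‖ * max K (2 * C + ‖f 0‖) := by gcongr; exact le_max_right _ _
  have hconst := hg.apply_eq_apply_of_bounded
    (isBounded_iff_forall_norm_le.2 ⟨_, forall_mem_range.2 hbdd⟩) z 0
  rw [← sub_eq_iff_eq_add', ← sub_smul_dslope, sub_zero, hconst, dslope_same]

theorem Differentiable.eq_add_fderiv_of_norm_le {f : E → F} (hf : Differentiable ℂ f)
    {C : ℝ} (hC : ∀ v, ‖f v‖ ≤ C * (1 + ‖v‖)) (v : E) : f v = f 0 + fderiv ℂ f 0 v := by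
  have hC0 : 0 ≤ C := by simpa using (norm_nonneg _).trans (hC 0)
  have hline : HasDerivAt (fun t : ℂ => f (t • v)) (fderiv ℂ f 0 v) 0 := by
    have := (hf (0 • v)).hasFDerivAt.comp_hasDerivAt (0 : ℂ) ((hasDerivAt_id _).smul_const v)
    simpa [comp_def] using this
  have hline_diff : Differentiable ℂ fun t : ℂ => f (t • v) := by fun_prop
  have hbound : ∀ t : ℂ, ‖f (t • v)‖ ≤ C * (1 + ‖v‖) * (1 + ‖t‖) := fun t =>
    calc ‖f (t • v)‖ ≤ C * (1 + ‖t‖ * ‖v‖) := by simpa [norm_smul] using hC (t • v)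
      _ ≤ C * (1 + ‖v‖) * (1 + ‖t‖) := by
        nlinarith [mul_nonneg hC0 (mul_nonneg (norm_nonneg t) (norm_nonneg v)), norm_nonneg t,
          norm_nonneg v]
  simpa [hline.deriv] using hline_diff.eq_add_smul_deriv_of_norm_le hbound 1

end LinearGrowth

section BackwardOrbit

variable {φ : ℝ → ℝ}

/-- The backward orbit of `x` decreases to a fixed point of `φ`, and `0` is the only one. -/
theorem exists_backward_orbit_tendsto_zero (hφc : ContinuousOn φ (Ici 0))
    (hφs : SurjOn φ (Ici 0) (Ici 0)) (hφx : ∀ x, 0 < x → x < φ x) {x : ℝ} (hx : 0 ≤ x) :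
    ∃ y : ℕ → ℝ, y 0 = x ∧ (∀ n, y n ∈ Icc 0 x) ∧ (∀ n, φ (y (n + 1)) = y n) ∧
      Tendsto y atTop (𝓝[≥] 0) := by
  set y : ℕ → ℝ := fun n => (invFunOn φ (Ici 0))^[n] x
  have hy_nonneg : ∀ n, 0 ≤ y n := fun n => hφs.mapsTo_invFunOn.iterate n hx
  have hy_step : ∀ n, φ (y (n + 1)) = y n := fun n => by
    simp only [y, iterate_succ_apply']
    exact hφs.rightInvOn_invFunOn (hy_nonneg n)
  have hy_anti : Antitone y := antitone_nat_of_succ_le fun n => by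
    rcases (hy_nonneg (n + 1)).eq_or_lt with h | h
    · exact h ▸ hy_nonneg n
    · exact (hy_step n ▸ hφx _ h).le
  have hy_lim := tendsto_atTop_ciInf hy_anti ⟨0, forall_mem_range.2 hy_nonneg⟩
  set L := ⨅ n, y n
  have hL : 0 ≤ L := le_ciInf hy_nonneg
  have hφL : φ L = L := by
    have h := (hφc L hL).tendsto.comp
      (tendsto_nhdsWithin_iff.2 ⟨hy_lim.comp (tendsto_add_atTop_nat 1),
        Eventually.of_forall fun n => hy_nonneg (n + 1)⟩)
    exact tendsto_nhds_unique h (by simpa only [comp_def, hy_step] using hy_lim)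
  have hL0 : L = 0 := hL.eq_or_lt.elim Eq.symm fun h => absurd hφL (hφx L h).ne'
  refine ⟨y, rfl, fun n => ⟨hy_nonneg n, hy_anti n.zero_le⟩, hy_step, ?_⟩
  exact tendsto_nhdsWithin_iff.2 ⟨hL0 ▸ hy_lim, Eventually.of_forall hy_nonneg⟩

theorem eq_apply_zero_of_comp_eq {α : Type*} [TopologicalSpace α] [T2Space α]
    (hφc : ContinuousOn φ (Ici 0)) (hφs : SurjOn φ (Ici 0) (Ici 0))
    (hφx : ∀ x, 0 < x → x < φ x) {d : ℝ → α} (hd : ContinuousOn d (Ici 0))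
    (hdφ : ∀ x, 0 ≤ x → d (φ x) = d x) {x : ℝ} (hx : 0 ≤ x) : d x = d 0 := by
  obtain ⟨y, rfl, hy, hy_step, hy_lim⟩ := exists_backward_orbit_tendsto_zero hφc hφs hφx hx
  have hdy : ∀ n, d (y n) = d (y 0) := fun n => by
    induction n with
    | zero => rfl
    | succ n ih => rw [← ih, ← hy_step n, hdφ _ (hy _).1]
  exact tendsto_nhds_unique (by simpa only [comp_def, hdy] using tendsto_const_nhds)
    ((hd 0 self_mem_Ici).tendsto.comp hy_lim)

end BackwardOrbit

section Equivariant

variable {E F : Type*} [NormedAddCommGroup E] [NormedSpace ℂ E]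
  [NormedAddCommGroup F] [NormedSpace ℂ F] {lam : ℂ} {φ : ℝ → ℝ} {f : E → ℝ → F}

theorem apply_eq_pow_smul_apply_of_equivariant (hlam : lam ≠ 0)
    (hf : ∀ v x, 0 ≤ x → f (lam • v) (φ x) = lam • f v x) {y : ℕ → ℝ} (hy : ∀ n, 0 ≤ y n)
    (hy_step : ∀ n, φ (y (n + 1)) = y n) (v : E) (n : ℕ) :
    f v (y 0) = lam ^ n • f ((lam ^ n)⁻¹ • v) (y n) := by
  induction n with
  | zero => simp
  | succ n ih =>
    have hpow : lam • (lam ^ (n + 1))⁻¹ = (lam ^ n)⁻¹ := by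
      rw [pow_succ, mul_inv, smul_eq_mul, mul_left_comm, mul_inv_cancel₀ hlam, mul_one]
    rw [ih, ← hy_step n, ← hpow, smul_assoc, hf _ _ (hy _), smul_smul, ← pow_succ]

theorem exists_norm_le_of_equivariant [ProperSpace E] (hlam : 1 < ‖lam‖)
    (hφc : ContinuousOn φ (Ici 0)) (hφs : SurjOn φ (Ici 0) (Ici 0))
    (hφx : ∀ x, 0 < x → x < φ x) (hcont : ContinuousOn (uncurry f) (univ ×ˢ Ici 0))
    (hf : ∀ v x, 0 ≤ x → f (lam • v) (φ x) = lam • f v x) {x : ℝ} (hx : 0 ≤ x) :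
    ∃ C, ∀ v, ‖f v x‖ ≤ C * (1 + ‖v‖) := by
  obtain ⟨y, rfl, hy, hy_step, -⟩ := exists_backward_orbit_tendsto_zero hφc hφs hφx hx
  obtain ⟨M, hM⟩ :=
    ((isCompact_closedBall (0 : E) 1).prod isCompact_Icc).exists_bound_of_continuousOn
      (hcont.mono (prod_mono (subset_univ _) Icc_subset_Ici_self))
  have hM0 : 0 ≤ M := (norm_nonneg _).trans (hM (0, y 0) ⟨by simp, hy 0⟩)
  have hlam0 : lam ≠ 0 := norm_pos_iff.1 (one_pos.trans hlam)
  refine ⟨‖lam‖ * M, fun v => ?_⟩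
  obtain ⟨n, hn, hn'⟩ := exists_nat_pow_near (le_max_left 1 ‖v‖) hlam
  have hball : (lam ^ (n + 1))⁻¹ • v ∈ Metric.closedBall (0 : E) 1 := by
    rw [mem_closedBall_zero_iff, norm_smul, norm_inv, norm_pow, inv_mul_le_iff₀ (by positivity),
      mul_one]
    exact (le_max_right _ _).trans hn'.le
  rw [apply_eq_pow_smul_apply_of_equivariant hlam0 hf (fun n => (hy n).1) hy_step v (n + 1),
    norm_smul, norm_pow, pow_succ']
  calc ‖lam‖ * ‖lam‖ ^ n * ‖f ((lam ^ (n + 1))⁻¹ • v) (y (n + 1))‖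
      ≤ ‖lam‖ * max 1 ‖v‖ * M := by gcongr; exact hM (_, _) ⟨hball, hy (n + 1)⟩
    _ = ‖lam‖ * M * max 1 ‖v‖ := by ring
    _ ≤ ‖lam‖ * M * (1 + ‖v‖) := by
      gcongr; exact max_le_add_of_nonneg zero_le_one (norm_nonneg v)

theorem apply_eq_apply_zero_add_sub_of_equivariant [ProperSpace E] [CompleteSpace F]
    (hlam : 1 < ‖lam‖) (hφc : ContinuousOn φ (Ici 0)) (hφb : BijOn φ (Ici 0) (Ici 0))
    (hφx : ∀ x, 0 < x → x < φ x) (hcont : ContinuousOn (uncurry f) (univ ×ˢ Ici 0))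
    (hdiff : ∀ x, 0 ≤ x → Differentiable ℂ (f · x))
    (hf : ∀ v x, 0 ≤ x → f (lam • v) (φ x) = lam • f v x) (v : E) {x : ℝ} (hx : 0 ≤ x) :
    f v x = f 0 x + (f v 0 - f 0 0) := by
  have haff : ∀ x, 0 ≤ x → ∀ v, f v x - f 0 x = fderiv ℂ (f · x) 0 v := fun x hx v => by
    obtain ⟨C, hC⟩ := exists_norm_le_of_equivariant hlam hφc hφb.surjOn hφx hcont hf hx
    exact sub_eq_iff_eq_add'.2 ((hdiff x hx).eq_add_fderiv_of_norm_le hC v)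
  have hlam0 : lam ≠ 0 := norm_pos_iff.1 (one_pos.trans hlam)
  have hinv : ∀ x, 0 ≤ x → f v (φ x) - f 0 (φ x) = f v x - f 0 x := fun x hx => by
    have hφx := hφb.mapsTo hx
    have h0 : f 0 (φ x) = lam • f 0 x := by simpa using hf 0 x hx
    refine smul_right_injective F hlam0 ?_
    calc lam • (f v (φ x) - f 0 (φ x)) = f (lam • v) (φ x) - f 0 (φ x) := by
          rw [haff _ hφx, haff _ hφx, map_smul]
      _ = lam • (f v x - f 0 x) := by
          rw [hf v x hx, h0, smul_sub]
  have hslice : ∀ w, ContinuousOn (f w) (Ici 0) := fun w =>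
    hcont.uncurry_left w (mem_univ w)
  exact sub_eq_iff_eq_add'.1 (eq_apply_zero_of_comp_eq (d := fun x => f v x - f 0 x) hφc
    hφb.surjOn hφx ((hslice v).sub (hslice 0)) hinv hx)

end Equivariant

theorem apply_eq_apply_zero_add_sub_of_equivariant₂ {lam : ℂ} {φ : ℝ → ℝ} (hlam : 1 < ‖lam‖)
    (hφc : ContinuousOn φ (Ici 0)) (hφb : BijOn φ (Ici 0) (Ici 0))
    (hφx : ∀ x, 0 < x → x < φ x) {ξ : ℂ → ℂ → ℝ → ℂ}
    (hcont : ContinuousOn (fun p : ℂ × ℂ × ℝ => ξ p.1 p.2.1 p.2.2) (univ ×ˢ univ ×ˢ Ici 0))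
    (hdiff : ∀ x, 0 ≤ x → Differentiable ℂ (fun z : ℂ × ℂ => ξ z.1 z.2 x))
    (hξ : ∀ z₁ z₂ x, 0 ≤ x → ξ (lam * z₁) (lam * z₂) (φ x) = lam * ξ z₁ z₂ x)
    (z₁ z₂ : ℂ) {x : ℝ} (hx : 0 ≤ x) : ξ z₁ z₂ x = ξ 0 0 x + (ξ z₁ z₂ 0 - ξ 0 0 0) :=
  apply_eq_apply_zero_add_sub_of_equivariant (f := fun (z : ℂ × ℂ) x => ξ z.1 z.2 x) hlam hφc
    hφb hφx (hcont.comp (f := fun q : (ℂ × ℂ) × ℝ => (q.1.1, q.1.2, q.2))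
      (Continuous.continuousOn (by fun_prop)) fun _ hp => ⟨trivial, trivial, hp.2⟩) hdiff
    (fun z x hx => hξ z.1 z.2 x hx) (z₁, z₂) hx

theorem case_1_classification_general (lam : ℂ) (hlam : 1 < ‖lam‖)
    (φ : ℝ → ℝ)
    (hφcont : ContinuousOn φ (Set.Ici 0))
    (hφbij : Set.BijOn φ (Set.Ici 0) (Set.Ici 0))
    (hexp : ∀ x : ℝ, 0 < x → x < φ x)
    (ξ₁ ξ₂ : ℂ → ℂ → ℝ → ℂ)
    (hcont₁ : ContinuousOn (fun p : ℂ × ℂ × ℝ => ξ₁ p.1 p.2.1 p.2.2)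
      (Set.univ ×ˢ Set.univ ×ˢ Set.Ici 0))
    (hcont₂ : ContinuousOn (fun p : ℂ × ℂ × ℝ => ξ₂ p.1 p.2.1 p.2.2)
      (Set.univ ×ˢ Set.univ ×ˢ Set.Ici 0))
    (hholo₁ : ∀ x : ℝ, 0 ≤ x → Differentiable ℂ (fun z : ℂ × ℂ => ξ₁ z.1 z.2 x))
    (hholo₂ : ∀ x : ℝ, 0 ≤ x → Differentiable ℂ (fun z : ℂ × ℂ => ξ₂ z.1 z.2 x))
    (hbd₁ : ∀ z₁ z₂ : ℂ, ξ₁ z₁ z₂ 0 = z₁)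
    (hbd₂ : ∀ z₁ z₂ : ℂ, ξ₂ z₁ z₂ 0 = z₂)
    (hL1 : ∀ z₁ z₂ : ℂ, ∀ x : ℝ, 0 ≤ x →
      ξ₁ (lam * z₁) (lam * z₂) (φ x) = lam * ξ₁ z₁ z₂ x)
    (hL2 : ∀ z₁ z₂ : ℂ, ∀ x : ℝ, 0 ≤ x →
      ξ₂ (lam * z₁) (lam * z₂) (φ x) = lam * ξ₂ z₁ z₂ x) :
    ∃ a₁ a₂ : ℝ → ℂ,
      ContinuousOn a₁ (Set.Ici 0) ∧ ContinuousOn a₂ (Set.Ici 0) ∧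
      a₁ 0 = 0 ∧ a₂ 0 = 0 ∧
      (∀ x : ℝ, 0 ≤ x → a₁ (φ x) = lam * a₁ x) ∧
      (∀ x : ℝ, 0 ≤ x → a₂ (φ x) = lam * a₂ x) ∧
      ∀ z₁ z₂ : ℂ, ∀ x : ℝ, 0 ≤ x →
        ξ₁ z₁ z₂ x = z₁ + a₁ x ∧ ξ₂ z₁ z₂ x = z₂ + a₂ x := by
  have hslice : ∀ x ∈ Ici (0 : ℝ), ((0 : ℂ), (0 : ℂ), x) ∈ univ ×ˢ univ ×ˢ Ici 0 :=
    fun _ hx => ⟨mem_univ _, mem_univ _, hx⟩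
  refine ⟨fun x => ξ₁ 0 0 x, fun x => ξ₂ 0 0 x,
    hcont₁.comp (by fun_prop) hslice, hcont₂.comp (by fun_prop) hslice, hbd₁ 0 0, hbd₂ 0 0,
    fun x hx => by simpa using hL1 0 0 x hx, fun x hx => by simpa using hL2 0 0 x hx,
    fun z₁ z₂ x hx => ⟨?_, ?_⟩⟩
  · rw [apply_eq_apply_zero_add_sub_of_equivariant₂ hlam hφcont hφbij hexp hcont₁ hholo₁ hL1 z₁ z₂
      hx, hbd₁, hbd₁]
    ring
  · rw [apply_eq_apply_zero_add_sub_of_equivariant₂ hlam hφcont hφbij hexp hcont₂ hholo₂ hL2 z₁ z₂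
      hx, hbd₂, hbd₂]
    ring

/-- Case 1 of Section 3.2 (underlying Theorem 3.9): for `G = λ·id` with `|λ| > 1`,
any leafwise-holomorphic lift `(ξ₁, ξ₂)` restricting to the identity on the
boundary and equivariant for `(λz₁, λz₂, φ(x))` has the form
`ξ₁ = z₁ + a₁(x)`, `ξ₂ = z₂ + a₂(x)` with `aⱼ ∈ 𝒵_{φ,λ}`. -/
theorem case_1_classification (lam : ℂ) (hlam : 1 < ‖lam‖)
    (φ : ℝ → ℝ)
    (hφcont : ContinuousOn φ (Set.Ici 0))
    (hφmono : StrictMonoOn φ (Set.Ici 0))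
    (hφbij : Set.BijOn φ (Set.Ici 0) (Set.Ici 0))
    (hφ0 : φ 0 = 0)
    (hexp : ∀ x : ℝ, 0 < x → x < φ x)
    (ξ₁ ξ₂ : ℂ → ℂ → ℝ → ℂ)
    (hcont₁ : ContinuousOn (fun p : ℂ × ℂ × ℝ => ξ₁ p.1 p.2.1 p.2.2)
      (Set.univ ×ˢ Set.univ ×ˢ Set.Ici 0))
    (hcont₂ : ContinuousOn (fun p : ℂ × ℂ × ℝ => ξ₂ p.1 p.2.1 p.2.2)
      (Set.univ ×ˢ Set.univ ×ˢ Set.Ici 0))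
    (hholo₁ : ∀ x : ℝ, 0 ≤ x → Differentiable ℂ (fun z : ℂ × ℂ => ξ₁ z.1 z.2 x))
    (hholo₂ : ∀ x : ℝ, 0 ≤ x → Differentiable ℂ (fun z : ℂ × ℂ => ξ₂ z.1 z.2 x))
    (hbd₁ : ∀ z₁ z₂ : ℂ, ξ₁ z₁ z₂ 0 = z₁)
    (hbd₂ : ∀ z₁ z₂ : ℂ, ξ₂ z₁ z₂ 0 = z₂)
    (hL1 : ∀ z₁ z₂ : ℂ, ∀ x : ℝ, 0 ≤ x →
      ξ₁ (lam * z₁) (lam * z₂) (φ x) = lam * ξ₁ z₁ z₂ x)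
    (hL2 : ∀ z₁ z₂ : ℂ, ∀ x : ℝ, 0 ≤ x →
      ξ₂ (lam * z₁) (lam * z₂) (φ x) = lam * ξ₂ z₁ z₂ x) :
    ∃ a₁ a₂ : ℝ → ℂ,
      ContinuousOn a₁ (Set.Ici 0) ∧ ContinuousOn a₂ (Set.Ici 0) ∧
      a₁ 0 = 0 ∧ a₂ 0 = 0 ∧
      (∀ x : ℝ, 0 ≤ x → a₁ (φ x) = lam * a₁ x) ∧
      (∀ x : ℝ, 0 ≤ x → a₂ (φ x) = lam * a₂ x) ∧
      ∀ z₁ z₂ : ℂ, ∀ x : ℝ, 0 ≤ x →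
        ξ₁ z₁ z₂ x = z₁ + a₁ x ∧ ξ₂ z₁ z₂ x = z₂ + a₂ x :=
  case_1_classification_general lam hlam φ hφcont hφbij hexp ξ₁ ξ₂ hcont₁ hcont₂ hholo₁ hholo₂ hbd₁
    hbd₂ hL1 hL2
end

section
/- Let μ ∈ ℂ with |μ| > 1 and let p ≥ 2 be an integer. Suppose ξ₁, ξ₂ : ℂ² × [0,∞) → ℂ are as in the context and satisfy ξ₁(μᵖz₁, μz₂, φ(x)) = μᵖ·ξ₁(z₁,z₂,x) and ξ₂(μᵖz₁, μz₂, φ(x)) = μ·ξ₂(z₁,z₂,x) for all (z₁,z₂) ∈ ℂ² and x ≥ 0. Then there exist continuous functions a₀, a₁, …, a_{p−1}, b : [0,∞) → ℂ, all vanishing at 0, with aⱼ(φ(x)) = μ^{p−j}·aⱼ(x) for 0 ≤ j ≤ p−1 and b(φ(x)) = μ·b(x), such that ξ₁(z₁,z₂,x) = z₁ + Σ_{j=0}^{p−1} aⱼ(x)·z₂ʲ and ξ₂(z₁,z₂,x) = z₂ + b(x). (Classification in Case 2 of Section 3.2, underlying Theorem 3.10 (1)) -/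
/-!
Let `ψ` be the inverse of `φ` on `[0, ∞)`; its iterates drive every `x ≥ 0` to `0`. If a slice
`w ↦ f w x` of a leafwise entire function satisfies `f (σ w) (φ t) = c f w t`, running this
backwards gives `f (σⁿ w) x = cⁿ f w (ψⁿ x)`, so `f · x` is `O(|c|ⁿ)` on the disc of radius `|σ|ⁿ`.
When `|c| ≤ |σ|ᵈ`, Cauchy's estimates kill all Taylor coefficients of order `> d`: the slice is a
polynomial of degree `≤ d`. In `z₁` (with `σ = μᵖ`) this makes both components affine; in `z₂`
(with `σ = μ`) it makes `ξ₁(0, ·, x)` a polynomial of degree `≤ p` and `ξ₂(0, ·, x)` affine.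
A coefficient `a` with `a (φ x) = λ a x`, `|λ| ≤ 1` and `a 0 = 0` vanishes, because
`a x = λⁿ a (ψⁿ x) → 0`. Applied to the `z₁`-slopes (multipliers `1` and `μ¹⁻ᵖ`) and to the leading
`z₂`-coefficients (multiplier `1`), minus their values at `x = 0`, this leaves the normal form.
-/

open Set Filter Topology Polynomial Function

section Equivariance

variable {T : Type*} {S : Set T} {Φ Ψ : T → T}

theorem apply_iterate_eq_pow_smul {α M E : Type*} [Monoid M] [MulAction M E]
    (hΨ : MapsTo Ψ S S) (hΦΨ : RightInvOn Ψ Φ S) {F : α → T → E} {g : α → α} {c : M}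
    (hF : ∀ a, ∀ s ∈ S, F (g a) (Φ s) = c • F a s) (n : ℕ) (a : α) {s : T} (hs : s ∈ S) :
    F (g^[n] a) s = c ^ n • F a (Ψ^[n] s) := by
  induction n generalizing s with
  | zero => simp
  | succ n ih =>
    rw [iterate_succ_apply', iterate_succ_apply, pow_succ', ← smul_smul, ← ih (hΨ hs),
      ← hF _ _ (hΨ hs), hΦΨ hs]

theorem eq_zero_of_map_eq_smul_of_tendsto [TopologicalSpace T] {𝕜 E : Type*} [NormedField 𝕜]
    [NormedAddCommGroup E] [NormedSpace 𝕜 E] (hΨ : MapsTo Ψ S S) (hΦΨ : RightInvOn Ψ Φ S)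
    {F : T → E} {c : 𝕜} (hc : ‖c‖ ≤ 1) (hF : ∀ s ∈ S, F (Φ s) = c • F s) {s₀ : T}
    (hF₀ : F s₀ = 0) (hFc : ContinuousWithinAt F S s₀) {s : T} (hs : s ∈ S)
    (hlim : Tendsto (fun n ↦ Ψ^[n] s) atTop (𝓝 s₀)) : F s = 0 := by
  have hiter (n : ℕ) : F s = c ^ n • F (Ψ^[n] s) :=
    apply_iterate_eq_pow_smul (F := fun (_ : Unit) ↦ F) (g := id) hΨ hΦΨ (fun _ ↦ hF) n () hs
  have hlimF : Tendsto (fun n ↦ F (Ψ^[n] s)) atTop (𝓝 0) :=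
    hF₀ ▸ hFc.tendsto.comp (tendsto_nhdsWithin_iff.2
      ⟨hlim, Eventually.of_forall fun n ↦ hΨ.iterate n hs⟩)
  refine norm_le_zero_iff.1 (ge_of_tendsto' (norm_zero (E := E) ▸ hlimF.norm) fun n ↦ ?_)
  rw [hiter n, norm_smul, norm_pow]
  exact mul_le_of_le_one_left (norm_nonneg _) (pow_le_one₀ (norm_nonneg _) hc)

end Equivariance

section Interpolation

/-- Interpolation rather than Taylor expansion: the coefficients are finite linear combinations
of values of `f`, hence continuous in any parameter on which `f` depends continuously. -/
noncomputable def interpolant (N : ℕ) (f : ℂ → ℂ) : ℂ[X] :=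
  Lagrange.interpolate (Finset.range N) (fun i : ℕ ↦ (i : ℂ)) fun i ↦ f i

theorem interpolant_eq {N : ℕ} {f : ℂ → ℂ} {q : ℂ[X]} (hq : q.degree < N)
    (hf : ∀ i < N, q.eval (i : ℂ) = f i) : interpolant N f = q :=
  (Lagrange.eq_interpolate_of_eval_eq _ Nat.cast_injective.injOn (by rwa [Finset.card_range])
    fun i hi ↦ hf i (Finset.mem_range.1 hi)).symm

theorem continuousOn_interpolant_coeff {X : Type*} [TopologicalSpace X] {f : ℂ → X → ℂ}
    {s : Set X} (hf : ∀ i : ℕ, ContinuousOn (f i) s) (N k : ℕ) :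
    ContinuousOn (fun x ↦ (interpolant N (f · x)).coeff k) s := by
  simp only [interpolant, Lagrange.interpolate_apply, finsetSum_coeff, coeff_C_mul]
  fun_prop

theorem natDegree_interpolant_lt (N : ℕ) (f : ℂ → ℂ) :
    (interpolant (N + 1) f).natDegree < N + 1 := by
  rcases eq_or_ne (interpolant (N + 1) f) 0 with h | h
  · simp [h]
  · rw [natDegree_lt_iff_degree_lt h]
    simpa [interpolant] using Lagrange.degree_interpolate_lt (s := Finset.range (N + 1))
      (fun i ↦ f i) (Nat.cast_injective (R := ℂ)).injOn

theorem interpolant_two (f : ℂ → ℂ) : interpolant 2 f = C (f 0) + C (f 1 - f 0) * X := by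
  refine interpolant_eq (by compute_degree!) fun i hi ↦ ?_
  interval_cases i <;> simp

theorem interpolant_coeff_mul_pow {N k : ℕ} {f g : ℂ → ℂ} {σ c : ℂ}
    (hf : ∀ z, f z = (interpolant N f).eval z) (hg : ∀ z, g z = (interpolant N g).eval z)
    (h : ∀ z, f (σ * z) = c * g z) :
    (interpolant N f).coeff k * σ ^ k = c * (interpolant N g).coeff k := by
  have : (interpolant N f).comp (C σ * X) = C c * interpolant N g :=
    Polynomial.funext fun z ↦ by simp [← hf, ← hg, h]
  simpa using congrArg (coeff · k) this

end Interpolation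

section Liouville

theorem iteratedDeriv_eq_zero_of_norm_le_pow {F : Type*} [NormedAddCommGroup F]
    [NormedSpace ℂ F] [CompleteSpace F] {g : ℂ → F} (hg : Differentiable ℂ g) {σ : ℂ}
    {K M : ℝ} {d m : ℕ} (hσ : 1 < ‖σ‖) (hK₀ : 0 ≤ K) (hK : K ≤ ‖σ‖ ^ d)
    (hbound : ∀ n w, ‖w‖ ≤ 1 → ‖g (σ ^ n * w)‖ ≤ K ^ n * M) (hm : d < m) :
    iteratedDeriv m g 0 = 0 := by
  have hσ₀ : σ ≠ 0 := norm_pos_iff.1 (one_pos.trans hσ)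
  set r := K / ‖σ‖ ^ m
  have hr : r < 1 := (div_lt_one (by positivity)).2 (hK.trans_lt (pow_lt_pow_right₀ hσ hm))
  have hcauchy (n : ℕ) : ‖iteratedDeriv m g 0‖ ≤ m.factorial * M * r ^ n := by
    refine (Complex.norm_iteratedDeriv_le_of_forall_mem_sphere_norm_le (R := ‖σ‖ ^ n)
      (C := K ^ n * M) m (by positivity) hg.diffContOnCl fun z hz ↦ ?_).trans_eq ?_
    · have hz : ‖z / σ ^ n‖ = 1 := by
        rw [norm_div, norm_pow, div_eq_one_iff_eq (by positivity)]
        simpa using hz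
      simpa [mul_div_cancel₀ z (pow_ne_zero n hσ₀)] using hbound n (z / σ ^ n) hz.le
    · rw [div_pow, ← pow_mul, ← pow_mul', pow_mul]
      field_simp
  have hlim : Tendsto (fun n ↦ m.factorial * M * r ^ n) atTop (𝓝 0) := by
    simpa using (tendsto_pow_atTop_nhds_zero_of_lt_one (by positivity) hr).const_mul
      (m.factorial * M)
  exact norm_le_zero_iff.1 (ge_of_tendsto' hlim hcauchy)

open Nat in
theorem eq_eval_interpolant_of_iteratedDeriv_eq_zero {g : ℂ → ℂ} (hg : Differentiable ℂ g)
    {d : ℕ} (hd : ∀ m, d < m → iteratedDeriv m g 0 = 0) (z : ℂ) :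
    g z = (interpolant (d + 1) g).eval z := by
  set q : ℂ[X] := ∑ m ∈ Finset.range (d + 1), C ((m ! : ℂ)⁻¹ * iteratedDeriv m g 0) * X ^ m
  have hq (w : ℂ) : g w = q.eval w := by
    refine ((Complex.hasSum_taylorSeries_of_entire hg 0 w).unique
      (hasSum_sum_of_ne_finset_zero (s := Finset.range (d + 1)) fun m hm ↦ ?_)).trans ?_
    · simp [hd m (by simpa using hm)]
    · simp [q, eval_finsetSum, mul_comm, mul_left_comm]
  have hdeg : q.degree < ↑(d + 1) := by
    rw [← mem_degreeLT]
    refine Submodule.sum_mem _ fun m hm ↦ mem_degreeLT.2 ((degree_C_mul_X_pow_le m _).trans_lt ?_)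
    exact_mod_cast Finset.mem_range.1 hm
  rw [interpolant_eq hdeg fun i _ ↦ (hq i).symm, hq]

theorem eq_eval_interpolant_of_equivariant {T : Type*} [TopologicalSpace T] {S K : Set T}
    {Φ Ψ : T → T} (hΨ : MapsTo Ψ S S) (hΦΨ : RightInvOn Ψ Φ S) {f : ℂ → T → ℂ}
    (hf : ContinuousOn (fun q : ℂ × T ↦ f q.1 q.2) (univ ×ˢ S))
    (hdiff : ∀ s ∈ S, Differentiable ℂ (f · s)) {σ c : ℂ} {d : ℕ} (hσ : 1 < ‖σ‖)
    (hc : ‖c‖ ≤ ‖σ‖ ^ d) (hequiv : ∀ w, ∀ s ∈ S, f (σ * w) (Φ s) = c * f w s)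
    (hK : IsCompact K) (hKS : K ⊆ S) {s : T} (hs : s ∈ S) (horbit : ∀ n, Ψ^[n] s ∈ K)
    (w : ℂ) : f w s = (interpolant (d + 1) (f · s)).eval w := by
  obtain ⟨M, hM⟩ := ((isCompact_closedBall (0 : ℂ) 1).prod hK).exists_bound_of_continuousOn
    (hf.mono (prod_mono (subset_univ _) hKS))
  refine eq_eval_interpolant_of_iteratedDeriv_eq_zero (hdiff s hs) (fun m hm ↦
    iteratedDeriv_eq_zero_of_norm_le_pow (M := M) (hdiff s hs) hσ (norm_nonneg c) hc
      (fun n v hv ↦ ?_) hm) w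
  have := apply_iterate_eq_pow_smul (F := f) (g := (σ * ·)) (c := c) hΨ hΦΨ hequiv n v hs
  rw [mul_left_iterate_apply, smul_eq_mul] at this
  rw [this, norm_mul, norm_pow]
  exact mul_le_mul_of_nonneg_left (hM (v, Ψ^[n] s) ⟨by simpa using hv, horbit n⟩)
    (by positivity)

end Liouville

structure IsExpandingOnIci (φ : ℝ → ℝ) : Prop where
  continuousOn : ContinuousOn φ (Ici 0)
  bijOn : BijOn φ (Ici 0) (Ici 0)
  lt_apply : ∀ x, 0 < x → x < φ x

structure IsLeafwiseEntire (f : ℂ → ℝ → ℂ) : Prop where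
  continuousOn : ContinuousOn (fun q : ℂ × ℝ ↦ f q.1 q.2) (univ ×ˢ Ici 0)
  differentiable : ∀ x, 0 ≤ x → Differentiable ℂ (f · x)

theorem IsLeafwiseEntire.continuousOn_apply {f : ℂ → ℝ → ℂ} (hf : IsLeafwiseEntire f)
    (w : ℂ) : ContinuousOn (f w) (Ici 0) :=
  hf.continuousOn.comp (continuous_const.prodMk continuous_id).continuousOn
    fun _ ht ↦ ⟨mem_univ _, ht⟩

structure IsLeafwiseEntire₂ (ξ : ℂ → ℂ → ℝ → ℂ) : Prop where
  continuousOn : ContinuousOn (fun q : ℂ × ℂ × ℝ ↦ ξ q.1 q.2.1 q.2.2) (univ ×ˢ univ ×ˢ Ici 0)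
  differentiable : ∀ x, 0 ≤ x → Differentiable ℂ fun z : ℂ × ℂ ↦ ξ z.1 z.2 x

theorem IsLeafwiseEntire₂.apply {ξ : ℂ → ℂ → ℝ → ℂ} (hξ : IsLeafwiseEntire₂ ξ) (u : ℂ) :
    IsLeafwiseEntire (ξ u) where
  continuousOn := hξ.continuousOn.comp (continuous_const.prodMk continuous_id).continuousOn
    fun _ hq ↦ ⟨mem_univ _, hq⟩
  differentiable x hx :=
    (hξ.differentiable x hx).comp ((differentiable_const u).prodMk differentiable_id)

namespace IsExpandingOnIci

variable {φ : ℝ → ℝ} (hφ : IsExpandingOnIci φ)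
include hφ

theorem mapsTo_invFunOn : MapsTo (invFunOn φ (Ici 0)) (Ici 0) (Ici 0) :=
  hφ.bijOn.surjOn.mapsTo_invFunOn

theorem rightInvOn_invFunOn : RightInvOn (invFunOn φ (Ici 0)) φ (Ici 0) :=
  hφ.bijOn.surjOn.rightInvOn_invFunOn

theorem invFunOn_le {y : ℝ} (hy : 0 ≤ y) : invFunOn φ (Ici 0) y ≤ y := by
  by_contra! h
  have := hφ.lt_apply _ (hy.trans_lt h)
  rw [hφ.rightInvOn_invFunOn hy] at this
  exact lt_asymm h this

theorem iterate_invFunOn_mem_Icc {y : ℝ} (hy : 0 ≤ y) (n : ℕ) :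
    (invFunOn φ (Ici 0))^[n] y ∈ Icc 0 y := by
  induction n with
  | zero => exact ⟨hy, le_rfl⟩
  | succ n ih =>
    rw [iterate_succ_apply']
    exact ⟨hφ.mapsTo_invFunOn ih.1, (hφ.invFunOn_le ih.1).trans ih.2⟩

theorem tendsto_iterate_invFunOn {y : ℝ} (hy : 0 ≤ y) :
    Tendsto (fun n ↦ (invFunOn φ (Ici 0))^[n] y) atTop (𝓝 0) := by
  set ψ := invFunOn φ (Ici 0)
  have hmem := hφ.iterate_invFunOn_mem_Icc hy
  have hanti : Antitone fun n ↦ ψ^[n] y := antitone_nat_of_succ_le fun n ↦ by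
    rw [iterate_succ_apply']
    exact hφ.invFunOn_le (hmem n).1
  have hL := tendsto_atTop_ciInf hanti ⟨0, by rintro _ ⟨n, rfl⟩; exact (hmem n).1⟩
  set L := ⨅ n, ψ^[n] y
  have hL₀ : 0 ≤ L := ge_of_tendsto' hL fun n ↦ (hmem n).1
  -- the limit is a fixed point of `φ`, and `0` is the only one
  have hφL : φ L = L := by
    have hshift : (fun n ↦ φ (ψ^[n + 1] y)) = fun n ↦ ψ^[n] y := funext fun n ↦ by
      rw [iterate_succ_apply', hφ.rightInvOn_invFunOn (hmem n).1]
    refine tendsto_nhds_unique ((hφ.continuousOn L hL₀).tendsto.comp ?_) (hshift ▸ hL)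
    exact tendsto_nhdsWithin_iff.2 ⟨hL.comp (tendsto_add_atTop_nat 1),
      Eventually.of_forall fun n ↦ (hmem (n + 1)).1⟩
  obtain hL₀ | hL₀ := hL₀.eq_or_lt
  · exact hL₀ ▸ hL
  · exact absurd (hφ.lt_apply L hL₀) (hφL.symm ▸ lt_irrefl L)

theorem eq_zero_of_map_eq_smul {𝕜 E : Type*} [NormedField 𝕜] [NormedAddCommGroup E]
    [NormedSpace 𝕜 E] {F : ℝ → E} {c : 𝕜} (hF : ContinuousOn F (Ici 0)) (hc : ‖c‖ ≤ 1)
    (hFφ : ∀ t, 0 ≤ t → F (φ t) = c • F t) (hF₀ : F 0 = 0) {x : ℝ} (hx : 0 ≤ x) : F x = 0 :=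
  eq_zero_of_map_eq_smul_of_tendsto hφ.mapsTo_invFunOn hφ.rightInvOn_invFunOn hc hFφ hF₀
    (hF 0 self_mem_Ici) hx (hφ.tendsto_iterate_invFunOn hx)

section Slice

variable {f : ℂ → ℝ → ℂ} (hf : IsLeafwiseEntire f) {σ c : ℂ} {d : ℕ} (hσ : 1 < ‖σ‖)
  (hequiv : ∀ w t, 0 ≤ t → f (σ * w) (φ t) = c * f w t)
include hf hσ hequiv

theorem eq_eval_interpolant (hc : ‖c‖ ≤ ‖σ‖ ^ d) {x : ℝ} (hx : 0 ≤ x) (w : ℂ) :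
    f w x = (interpolant (d + 1) (f · x)).eval w :=
  eq_eval_interpolant_of_equivariant hφ.mapsTo_invFunOn hφ.rightInvOn_invFunOn hf.continuousOn
    hf.differentiable hσ hc hequiv isCompact_Icc Icc_subset_Ici_self hx
    (hφ.iterate_invFunOn_mem_Icc hx) w

theorem interpolant_coeff_map_mul_pow (hc : ‖c‖ ≤ ‖σ‖ ^ d) {t : ℝ} (ht : 0 ≤ t) (k : ℕ) :
    (interpolant (d + 1) (f · (φ t))).coeff k * σ ^ k =
      c * (interpolant (d + 1) (f · t)).coeff k :=
  interpolant_coeff_mul_pow (hφ.eq_eval_interpolant hf hσ hequiv hc (hφ.bijOn.mapsTo ht))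
    (hφ.eq_eval_interpolant hf hσ hequiv hc ht) fun w ↦ hequiv w t ht

theorem interpolant_coeff_top_eq (hcσ : c = σ ^ d) {x : ℝ} (hx : 0 ≤ x) :
    (interpolant (d + 1) (f · x)).coeff d = (interpolant (d + 1) (f · 0)).coeff d := by
  have hσd : σ ^ d ≠ 0 := pow_ne_zero d (norm_pos_iff.1 (one_pos.trans hσ))
  set a := fun t ↦ (interpolant (d + 1) (f · t)).coeff d
  have hcont : ContinuousOn a (Ici 0) :=
    continuousOn_interpolant_coeff (fun i ↦ hf.continuousOn_apply i) _ _
  refine sub_eq_zero.1 (hφ.eq_zero_of_map_eq_smul (F := fun t ↦ a t - a 0)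
    (hcont.sub continuousOn_const) (norm_one (α := ℂ)).le (fun t ht ↦ ?_) (sub_self _) hx)
  have := hφ.interpolant_coeff_map_mul_pow hf hσ hequiv (by rw [hcσ, norm_pow]) ht d
  rw [hcσ, mul_comm] at this
  simp only [a, mul_left_cancel₀ hσd this, one_smul]

end Slice

theorem mapsTo_prodMap_invFunOn (a : ℂ) :
    MapsTo (Prod.map (a * ·) (invFunOn φ (Ici 0))) (univ ×ˢ Ici 0) (univ ×ˢ Ici 0) :=
  (mapsTo_univ _ _).prodMap hφ.mapsTo_invFunOn

theorem rightInvOn_prodMap_invFunOn {σ : ℂ} (hσ : σ ≠ 0) :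
    RightInvOn (Prod.map (σ⁻¹ * ·) (invFunOn φ (Ici 0))) (Prod.map (σ * ·) φ) (univ ×ˢ Ici 0) :=
  fun s hs ↦ Prod.ext (mul_inv_cancel_left₀ hσ s.1) (hφ.rightInvOn_invFunOn hs.2)

theorem eq_zero_of_map_mul_eq_smul {𝕜 E : Type*} [NormedField 𝕜] [NormedAddCommGroup E]
    [NormedSpace 𝕜 E] {F : ℂ → ℝ → E} {σ : ℂ} {c : 𝕜}
    (hF : ContinuousOn (fun q : ℂ × ℝ ↦ F q.1 q.2) (univ ×ˢ Ici 0)) (hσ : 1 < ‖σ‖)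
    (hc : ‖c‖ ≤ 1) (hFφ : ∀ v t, 0 ≤ t → F (σ * v) (φ t) = c • F v t) (hF₀ : F 0 0 = 0)
    {x : ℝ} (hx : 0 ≤ x) (v : ℂ) : F v x = 0 := by
  refine eq_zero_of_map_eq_smul_of_tendsto (F := fun q : ℂ × ℝ ↦ F q.1 q.2) (s₀ := (0, 0))
    (hφ.mapsTo_prodMap_invFunOn σ⁻¹)
    (hφ.rightInvOn_prodMap_invFunOn (norm_pos_iff.1 (one_pos.trans hσ))) hc
    (fun s hs ↦ hFφ s.1 s.2 hs.2) hF₀ (hF _ ⟨mem_univ _, self_mem_Ici⟩) (s := (v, x))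
    ⟨mem_univ _, hx⟩ ?_
  simp only [Prod.map_iterate, mul_left_iterate_apply, Prod.map_apply]
  refine Tendsto.prodMk_nhds ?_ (hφ.tendsto_iterate_invFunOn hx)
  simpa using (tendsto_pow_atTop_nhds_zero_of_norm_lt_one (x := σ⁻¹)
    (by simpa using inv_lt_one_of_one_lt₀ hσ)).mul_const v

section Lift

variable {ξ : ℂ → ℂ → ℝ → ℂ} (hξ : IsLeafwiseEntire₂ ξ) {σ₁ σ₂ c : ℂ} (hσ₁ : 1 < ‖σ₁‖)
  (hσ₂ : 1 ≤ ‖σ₂‖) (hc : ‖c‖ ≤ ‖σ₁‖)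
  (hequiv : ∀ u v t, 0 ≤ t → ξ (σ₁ * u) (σ₂ * v) (φ t) = c * ξ u v t)
include hξ hσ₁ hσ₂ hc hequiv

theorem eq_add_mul_of_equivariant {x : ℝ} (hx : 0 ≤ x) (u v : ℂ) :
    ξ u v x = ξ 0 v x + (ξ 1 v x - ξ 0 v x) * u := by
  have horbit (n : ℕ) : (Prod.map (σ₂⁻¹ * ·) (invFunOn φ (Ici 0)))^[n] (v, x) ∈
      Metric.closedBall 0 ‖v‖ ×ˢ Icc 0 x := by
    simp only [Prod.map_iterate, mul_left_iterate_apply, Prod.map_apply]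
    refine ⟨?_, hφ.iterate_invFunOn_mem_Icc hx n⟩
    rw [mem_closedBall_zero_iff, norm_mul, norm_pow, norm_inv]
    exact mul_le_of_le_one_left (norm_nonneg v)
      (pow_le_one₀ (by positivity) (inv_le_one_of_one_le₀ hσ₂))
  have := eq_eval_interpolant_of_equivariant (f := fun u s ↦ ξ u s.1 s.2) (d := 1)
    (hφ.mapsTo_prodMap_invFunOn σ₂⁻¹)
    (hφ.rightInvOn_prodMap_invFunOn (norm_pos_iff.1 (one_pos.trans_le hσ₂))) hξ.continuousOn
    (fun s hs ↦ (hξ.differentiable s.2 hs.2).comp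
      (differentiable_id.prodMk (differentiable_const _)))
    hσ₁ (by rwa [pow_one]) (fun u s hs ↦ hequiv u s.1 s.2 hs.2)
    ((isCompact_closedBall 0 ‖v‖).prod isCompact_Icc)
    (prod_mono (subset_univ _) Icc_subset_Ici_self) (s := (v, x)) ⟨mem_univ _, hx⟩ horbit u
  simpa [interpolant_two] using this

theorem slope_equivariant {t : ℝ} (ht : 0 ≤ t) (v : ℂ) :
    (ξ 1 (σ₂ * v) (φ t) - ξ 0 (σ₂ * v) (φ t)) * σ₁ = c * (ξ 1 v t - ξ 0 v t) := by
  have h₁ := hequiv 1 v t ht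
  have h₀ := hequiv 0 v t ht
  rw [mul_one, hφ.eq_add_mul_of_equivariant hξ hσ₁ hσ₂ hc hequiv (hφ.bijOn.mapsTo ht)] at h₁
  rw [mul_zero] at h₀
  linear_combination h₁ - h₀

end Lift

section Components

variable {ξ : ℂ → ℂ → ℝ → ℂ} (hξ : IsLeafwiseEntire₂ ξ) {μ : ℂ} (hμ : 1 < ‖μ‖) {p : ℕ}
  (hp : 1 ≤ p)
include hξ hμ hp

theorem eq_snd_add_of_equivariant (hbd : ∀ u v, ξ u v 0 = v)
    (hequiv : ∀ u v t, 0 ≤ t → ξ (μ ^ p * u) (μ * v) (φ t) = μ * ξ u v t) {x : ℝ} (hx : 0 ≤ x)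
    (u v : ℂ) : ξ u v x = v + ξ 0 0 x := by
  have hμp₀ : μ ^ p ≠ 0 := pow_ne_zero p (norm_pos_iff.1 (one_pos.trans hμ))
  have hμp : 1 < ‖μ ^ p‖ := by rw [norm_pow]; exact one_lt_pow₀ hμ (by omega)
  have hμμp : ‖μ‖ ≤ ‖μ ^ p‖ := by rw [norm_pow]; exact le_self_pow₀ hμ.le (by omega)
  have hslope : ξ 1 v x - ξ 0 v x = 0 := by
    refine hφ.eq_zero_of_map_mul_eq_smul (F := fun v t ↦ ξ 1 v t - ξ 0 v t) (c := μ / μ ^ p)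
      ((hξ.apply 1).continuousOn.sub (hξ.apply 0).continuousOn) hμ ?_ (fun v t ht ↦ ?_)
      (by simp [hbd]) hx v
    · rw [norm_div]
      exact div_le_one_of_le₀ hμμp (norm_nonneg _)
    · rw [smul_eq_mul, div_mul_eq_mul_div, eq_div_iff hμp₀]
      exact hφ.slope_equivariant hξ hμp hμ.le hμμp hequiv ht v
  have hequiv₀ (w : ℂ) (t : ℝ) (ht : 0 ≤ t) : ξ 0 (μ * w) (φ t) = μ ^ 1 * ξ 0 w t := by
    simpa using hequiv 0 w t ht
  have hγ : ξ 0 v x = (interpolant 2 (ξ 0 · x)).eval v :=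
    hφ.eq_eval_interpolant (hξ.apply 0) hμ hequiv₀ (norm_pow μ 1).le hx v
  have htop : (interpolant 2 (ξ 0 · x)).coeff 1 = (interpolant 2 (ξ 0 · 0)).coeff 1 :=
    hφ.interpolant_coeff_top_eq (hξ.apply 0) hμ hequiv₀ rfl hx
  simp only [interpolant_two, eval_add, eval_C, eval_mul, eval_X] at hγ
  simp [interpolant_two, hbd] at htop
  rw [hφ.eq_add_mul_of_equivariant hξ hμp hμ.le hμμp hequiv hx u v, hslope, hγ]
  linear_combination v * htop

theorem eq_fst_add_sum_of_equivariant (hbd : ∀ u v, ξ u v 0 = u)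
    (hequiv : ∀ u v t, 0 ≤ t → ξ (μ ^ p * u) (μ * v) (φ t) = μ ^ p * ξ u v t) {x : ℝ}
    (hx : 0 ≤ x) (u v : ℂ) :
    ξ u v x = u + ∑ j ∈ Finset.range p, (interpolant (p + 1) (ξ 0 · x)).coeff j * v ^ j := by
  have hμp₀ : μ ^ p ≠ 0 := pow_ne_zero p (norm_pos_iff.1 (one_pos.trans hμ))
  have hμp : 1 < ‖μ ^ p‖ := by rw [norm_pow]; exact one_lt_pow₀ hμ (by omega)
  have hslope : ξ 1 v x - ξ 0 v x = 1 := by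
    refine sub_eq_zero.1 <| hφ.eq_zero_of_map_mul_eq_smul
      (F := fun v t ↦ ξ 1 v t - ξ 0 v t - 1) (c := (1 : ℂ))
      (((hξ.apply 1).continuousOn.sub (hξ.apply 0).continuousOn).sub continuousOn_const) hμ
      norm_one.le (fun v t ht ↦ ?_) (by simp [hbd]) hx v
    have := hφ.slope_equivariant hξ hμp hμ.le le_rfl hequiv ht v
    rw [one_smul, mul_right_cancel₀ hμp₀ (this.trans (mul_comm _ _))]
  have hequiv₀ (w : ℂ) (t : ℝ) (ht : 0 ≤ t) : ξ 0 (μ * w) (φ t) = μ ^ p * ξ 0 w t := by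
    simpa using hequiv 0 w t ht
  have htop : (interpolant (p + 1) (ξ 0 · x)).coeff p = 0 := by
    rw [hφ.interpolant_coeff_top_eq (hξ.apply 0) hμ hequiv₀ rfl hx]
    simp [hbd, interpolant]
  rw [hφ.eq_add_mul_of_equivariant hξ hμp hμ.le le_rfl hequiv hx u v, hslope,
    hφ.eq_eval_interpolant (hξ.apply 0) hμ hequiv₀ (norm_pow μ p).le hx v,
    eval_eq_sum_range' (natDegree_interpolant_lt p _), Finset.sum_range_succ, htop]
  ring

end Components

end IsExpandingOnIci

theorem case_2_classification_general (μ : ℂ) (hμ : 1 < ‖μ‖)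
    (p : ℕ) (hp : 2 ≤ p)
    (φ : ℝ → ℝ)
    (hφcont : ContinuousOn φ (Set.Ici 0))
    (hφbij : Set.BijOn φ (Set.Ici 0) (Set.Ici 0))
    (hexp : ∀ x : ℝ, 0 < x → x < φ x)
    (ξ₁ ξ₂ : ℂ → ℂ → ℝ → ℂ)
    (hcont₁ : ContinuousOn (fun q : ℂ × ℂ × ℝ => ξ₁ q.1 q.2.1 q.2.2)
      (Set.univ ×ˢ Set.univ ×ˢ Set.Ici 0))
    (hcont₂ : ContinuousOn (fun q : ℂ × ℂ × ℝ => ξ₂ q.1 q.2.1 q.2.2)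
      (Set.univ ×ˢ Set.univ ×ˢ Set.Ici 0))
    (hholo₁ : ∀ x : ℝ, 0 ≤ x → Differentiable ℂ (fun z : ℂ × ℂ => ξ₁ z.1 z.2 x))
    (hholo₂ : ∀ x : ℝ, 0 ≤ x → Differentiable ℂ (fun z : ℂ × ℂ => ξ₂ z.1 z.2 x))
    (hbd₁ : ∀ z₁ z₂ : ℂ, ξ₁ z₁ z₂ 0 = z₁)
    (hbd₂ : ∀ z₁ z₂ : ℂ, ξ₂ z₁ z₂ 0 = z₂)
    (hL1 : ∀ z₁ z₂ : ℂ, ∀ x : ℝ, 0 ≤ x →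
      ξ₁ (μ ^ p * z₁) (μ * z₂) (φ x) = μ ^ p * ξ₁ z₁ z₂ x)
    (hL2 : ∀ z₁ z₂ : ℂ, ∀ x : ℝ, 0 ≤ x →
      ξ₂ (μ ^ p * z₁) (μ * z₂) (φ x) = μ * ξ₂ z₁ z₂ x) :
    ∃ a : Fin p → ℝ → ℂ, ∃ b : ℝ → ℂ,
      (∀ j : Fin p, ContinuousOn (a j) (Set.Ici 0)) ∧
      ContinuousOn b (Set.Ici 0) ∧
      (∀ j : Fin p, a j 0 = 0) ∧ b 0 = 0 ∧
      (∀ j : Fin p, ∀ x : ℝ, 0 ≤ x → a j (φ x) = μ ^ (p - (j : ℕ)) * a j x) ∧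
      (∀ x : ℝ, 0 ≤ x → b (φ x) = μ * b x) ∧
      ∀ z₁ z₂ : ℂ, ∀ x : ℝ, 0 ≤ x →
        ξ₁ z₁ z₂ x = z₁ + ∑ j : Fin p, a j x * z₂ ^ (j : ℕ) ∧
        ξ₂ z₁ z₂ x = z₂ + b x := by
  have hφ : IsExpandingOnIci φ := ⟨hφcont, hφbij, hexp⟩
  have hξ₁ : IsLeafwiseEntire₂ ξ₁ := ⟨hcont₁, hholo₁⟩
  have hξ₂ : IsLeafwiseEntire₂ ξ₂ := ⟨hcont₂, hholo₂⟩
  have hequiv₀ (w : ℂ) (t : ℝ) (ht : 0 ≤ t) : ξ₁ 0 (μ * w) (φ t) = μ ^ p * ξ₁ 0 w t := by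
    simpa using hL1 0 w t ht
  set a : ℕ → ℝ → ℂ := fun j x ↦ (interpolant (p + 1) (ξ₁ 0 · x)).coeff j
  refine ⟨fun j ↦ a j, fun x ↦ ξ₂ 0 0 x,
    fun j ↦ continuousOn_interpolant_coeff (fun i ↦ (hξ₁.apply 0).continuousOn_apply i) _ _,
    (hξ₂.apply 0).continuousOn_apply 0, fun j ↦ by simp [a, hbd₁, interpolant], hbd₂ 0 0,
    fun j x hx ↦ ?_, fun x hx ↦ by simpa using hL2 0 0 x hx,
    fun z₁ z₂ x hx ↦ ⟨?_, hφ.eq_snd_add_of_equivariant hξ₂ hμ (by omega) hbd₂ hL2 hx z₁ z₂⟩⟩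
  · have := hφ.interpolant_coeff_map_mul_pow (hξ₁.apply 0) hμ hequiv₀ (norm_pow μ p).le hx j
    refine mul_right_cancel₀ (pow_ne_zero j (norm_pos_iff.1 (one_pos.trans hμ))) ?_
    rw [this, mul_right_comm, ← pow_add, Nat.sub_add_cancel j.is_lt.le, mul_comm]
  · rw [hφ.eq_fst_add_sum_of_equivariant hξ₁ hμ (by omega) hbd₁ hL1 hx,
      Fin.sum_univ_eq_sum_range (fun j ↦ a j x * z₂ ^ j)]

/-- Case 2 of Section 3.2 (underlying Theorem 3.10 (1)): for `G(z₁,z₂) = (μᵖz₁, μz₂)`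
with `|μ| > 1`, `p ≥ 2`, any leafwise-holomorphic lift `(ξ₁, ξ₂)` restricting to
the identity on the boundary and equivariant for `T` has the form
`ξ₁ = z₁ + Σ_{j<p} aⱼ(x)·z₂ʲ`, `ξ₂ = z₂ + b(x)` with `aⱼ ∈ 𝒵_{φ,μ^{p−j}}`,
`b ∈ 𝒵_{φ,μ}`. -/
theorem case_2_classification (μ : ℂ) (hμ : 1 < ‖μ‖)
    (p : ℕ) (hp : 2 ≤ p)
    (φ : ℝ → ℝ)
    (hφcont : ContinuousOn φ (Set.Ici 0))
    (hφmono : StrictMonoOn φ (Set.Ici 0))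
    (hφbij : Set.BijOn φ (Set.Ici 0) (Set.Ici 0))
    (hφ0 : φ 0 = 0)
    (hexp : ∀ x : ℝ, 0 < x → x < φ x)
    (ξ₁ ξ₂ : ℂ → ℂ → ℝ → ℂ)
    (hcont₁ : ContinuousOn (fun q : ℂ × ℂ × ℝ => ξ₁ q.1 q.2.1 q.2.2)
      (Set.univ ×ˢ Set.univ ×ˢ Set.Ici 0))
    (hcont₂ : ContinuousOn (fun q : ℂ × ℂ × ℝ => ξ₂ q.1 q.2.1 q.2.2)
      (Set.univ ×ˢ Set.univ ×ˢ Set.Ici 0))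
    (hholo₁ : ∀ x : ℝ, 0 ≤ x → Differentiable ℂ (fun z : ℂ × ℂ => ξ₁ z.1 z.2 x))
    (hholo₂ : ∀ x : ℝ, 0 ≤ x → Differentiable ℂ (fun z : ℂ × ℂ => ξ₂ z.1 z.2 x))
    (hbd₁ : ∀ z₁ z₂ : ℂ, ξ₁ z₁ z₂ 0 = z₁)
    (hbd₂ : ∀ z₁ z₂ : ℂ, ξ₂ z₁ z₂ 0 = z₂)
    (hL1 : ∀ z₁ z₂ : ℂ, ∀ x : ℝ, 0 ≤ x →
      ξ₁ (μ ^ p * z₁) (μ * z₂) (φ x) = μ ^ p * ξ₁ z₁ z₂ x)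
    (hL2 : ∀ z₁ z₂ : ℂ, ∀ x : ℝ, 0 ≤ x →
      ξ₂ (μ ^ p * z₁) (μ * z₂) (φ x) = μ * ξ₂ z₁ z₂ x) :
    ∃ a : Fin p → ℝ → ℂ, ∃ b : ℝ → ℂ,
      (∀ j : Fin p, ContinuousOn (a j) (Set.Ici 0)) ∧
      ContinuousOn b (Set.Ici 0) ∧
      (∀ j : Fin p, a j 0 = 0) ∧ b 0 = 0 ∧
      (∀ j : Fin p, ∀ x : ℝ, 0 ≤ x → a j (φ x) = μ ^ (p - (j : ℕ)) * a j x) ∧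
      (∀ x : ℝ, 0 ≤ x → b (φ x) = μ * b x) ∧
      ∀ z₁ z₂ : ℂ, ∀ x : ℝ, 0 ≤ x →
        ξ₁ z₁ z₂ x = z₁ + ∑ j : Fin p, a j x * z₂ ^ (j : ℕ) ∧
        ξ₂ z₁ z₂ x = z₂ + b x :=
  case_2_classification_general μ hμ p hp φ hφcont hφbij hexp ξ₁ ξ₂ hcont₁ hcont₂ hholo₁ hholo₂ hbd₁
    hbd₂ hL1 hL2
end

section
/- Let λ, μ ∈ ℂ with |λ| ≥ |μ| > 1 and λ ≠ μᵐ for every positive integer m, and set p = ⌊log|λ|/log|μ|⌋. Suppose ξ₁, ξ₂ : ℂ² × [0,∞) → ℂ are as in the context and satisfy ξ₁(λz₁, μz₂, φ(x)) = λ·ξ₁(z₁,z₂,x) and ξ₂(λz₁, μz₂, φ(x)) = μ·ξ₂(z₁,z₂,x) for all (z₁,z₂) ∈ ℂ² and x ≥ 0. Then there exist continuous functions a₀, a₁, …, a_p, b : [0,∞) → ℂ, all vanishing at 0, with aⱼ(φ(x)) = (λ/μʲ)·aⱼ(x) for 0 ≤ j ≤ p and b(φ(x)) = μ·b(x), such that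 ξ₁(z₁,z₂,x) = z₁ + Σ_{j=0}^{p} aⱼ(x)·z₂ʲ and ξ₂(z₁,z₂,x) = z₂ + b(x). (Classification in Case 3 of Section 3.2, underlying Theorem 3.10 (2)) -/
/-!
Pulling the equivariance back `n` times lands in the unit polydisc at a time in `[0, x]`, so by
compactness `ξ₁(·, ·, x)` is `O(|λ|ⁿ)` and `ξ₂(·, ·, x)` is `O(|μ|ⁿ)` on the polydisc of radii
`|λ|ⁿ, |μ|ⁿ`. Cauchy estimates turn this growth into vanishing of Taylor coefficients: both maps
are affine in `z₁` with a slope independent of `z₂`, `ξ₂` is affine in `z₂`, and `ξ₁(0, ·, x)` has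
degree at most `p` because `|λ| < |μ|^(p+1)`. By equivariance each slope satisfies
`d * s(φ x) = c * s(x)` with `|c| ≤ |d|`; a continuous solution vanishing at time `0` vanishes
identically, as backward `φ`-orbits accumulate only at `0`, so the slopes keep their boundary
values `1` and `0`. The coefficients of `ξ₁(0, ·, x)` depend continuously on `x` because a
Vandermonde inversion recovers them from finitely many values.
-/

open Set Filter Topology Metric Matrix

theorem lt_pow_floor_log_div_log_add_one {a b : ℝ} (ha : 0 < a) (hb : 1 < b) :
    a < b ^ (⌊Real.log a / Real.log b⌋₊ + 1) := by
  have hfloor := Nat.lt_floor_add_one (Real.log a / Real.log b)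
  rw [div_lt_iff₀ (Real.log_pos hb)] at hfloor
  rw [← Real.log_lt_log_iff ha (by positivity), Real.log_pow]
  exact_mod_cast hfloor

theorem iteratedDeriv_eq_zero_of_norm_le_pow_s15 {f : ℂ → ℂ} (hf : Differentiable ℂ f)
    {α β M : ℝ} {k : ℕ} (hα : 0 ≤ α) (hβ : 0 < β) (hk : α < β ^ k)
    (hbound : ∀ᶠ n : ℕ in atTop, ∀ z, ‖z‖ ≤ β ^ n → ‖f z‖ ≤ M * α ^ n) :
    iteratedDeriv k f 0 = 0 := by
  have hβk : 0 < β ^ k := pow_pos hβ k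
  have hcauchy : ∀ᶠ n : ℕ in atTop,
      ‖iteratedDeriv k f 0‖ ≤ Nat.factorial k * M * (α / β ^ k) ^ n := by
    filter_upwards [hbound] with n hn
    calc ‖iteratedDeriv k f 0‖ ≤ Nat.factorial k * (M * α ^ n) / (β ^ n) ^ k :=
          Complex.norm_iteratedDeriv_le_of_forall_mem_sphere_norm_le k (pow_pos hβ n)
            hf.diffContOnCl fun z hz => hn z (mem_sphere_zero_iff_norm.1 hz).le
      _ = Nat.factorial k * M * (α / β ^ k) ^ n := by
          rw [div_pow, ← pow_mul, ← pow_mul, mul_comm k n]; ring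
  have hlim : Tendsto (fun n : ℕ => Nat.factorial k * M * (α / β ^ k) ^ n) atTop (𝓝 0) := by
    simpa using (tendsto_pow_atTop_nhds_zero_of_lt_one (div_nonneg hα hβk.le)
      ((div_lt_one hβk).2 hk)).const_mul (Nat.factorial k * M)
  exact norm_le_zero_iff.1 (ge_of_tendsto hlim hcauchy)

theorem eq_sum_pow_of_norm_le_pow {f : ℂ → ℂ} (hf : Differentiable ℂ f)
    {α β M : ℝ} {p : ℕ} (hα : 0 ≤ α) (hβ : 1 ≤ β) (hp : α < β ^ (p + 1))
    (hbound : ∀ᶠ n : ℕ in atTop, ∀ z, ‖z‖ ≤ β ^ n → ‖f z‖ ≤ M * α ^ n) (z : ℂ) :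
    f z = ∑ j : Fin (p + 1), (Nat.factorial j : ℂ)⁻¹ * iteratedDeriv j f 0 * z ^ (j : ℕ) := by
  have hvanish : ∀ n ∉ Finset.range (p + 1), iteratedDeriv n f 0 = 0 := fun n hn =>
    iteratedDeriv_eq_zero_of_norm_le_pow_s15 hf hα (by positivity)
      (hp.trans_le (pow_le_pow_right₀ hβ (by simpa using hn))) hbound
  rw [Fin.sum_univ_eq_sum_range (fun j => (Nat.factorial j : ℂ)⁻¹ * iteratedDeriv j f 0 * z ^ j),
    ← Complex.taylorSeries_eq_of_entire' 0 z hf,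
    tsum_eq_sum (s := Finset.range (p + 1)) (fun n hn => by simp [hvanish n hn])]
  simp only [sub_zero]

theorem eq_add_mul_of_norm_le_pow {f : ℂ → ℂ} (hf : Differentiable ℂ f) {α M : ℝ} (hα : 1 < α)
    (hbound : ∀ᶠ n : ℕ in atTop, ∀ z, ‖z‖ ≤ α ^ n → ‖f z‖ ≤ M * α ^ n) (z : ℂ) :
    f z = f 0 + (f 1 - f 0) * z := by
  have h := eq_sum_pow_of_norm_le_pow hf (p := 1) (by positivity) hα.le
    (by simpa using lt_self_pow₀ hα one_lt_two) hbound
  simp only [Fin.sum_univ_succ, Fin.sum_univ_zero, Fin.val_zero, Fin.val_succ, Nat.factorial,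
    Nat.cast_one, inv_one, iteratedDeriv_zero, iteratedDeriv_one, one_mul, pow_zero, pow_one,
    mul_one, zero_add, add_zero] at h
  linear_combination h z - z * h 1

theorem eq_add_mul_of_norm_le_pow₂ {g : ℂ → ℂ → ℂ}
    (hg : Differentiable ℂ (fun z : ℂ × ℂ => g z.1 z.2)) {α β M : ℝ} (hα : 1 < α) (hβ : 1 < β)
    (hbound : ∀ n : ℕ, ∀ w₁ w₂ : ℂ, ‖w₁‖ ≤ α ^ n → ‖w₂‖ ≤ β ^ n → ‖g w₁ w₂‖ ≤ M * α ^ n)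
    (z₁ z₂ : ℂ) : g z₁ z₂ = g 0 z₂ + (g 1 0 - g 0 0) * z₁ := by
  have hdiff₁ : ∀ w₂, Differentiable ℂ (g · w₂) := fun w₂ =>
    hg.comp (differentiable_id.prodMk (differentiable_const w₂))
  have hdiff₂ : ∀ w₁, Differentiable ℂ (g w₁ ·) := fun w₁ =>
    hg.comp ((differentiable_const w₁).prodMk differentiable_id)
  have hradius : ∀ w₂ : ℂ, ∃ n₀ : ℕ, ‖w₂‖ ≤ β ^ n₀ := fun w₂ =>
    (pow_unbounded_of_one_lt ‖w₂‖ hβ).imp fun _ => le_of_lt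
  have haff : ∀ w₁ w₂, g w₁ w₂ = g 0 w₂ + (g 1 w₂ - g 0 w₂) * w₁ := fun w₁ w₂ => by
    obtain ⟨n₀, hn₀⟩ := hradius w₂
    refine eq_add_mul_of_norm_le_pow (hdiff₁ w₂) (M := M) hα ?_ w₁
    filter_upwards [eventually_ge_atTop n₀] with n hn w hw
    exact hbound n w w₂ hw (hn₀.trans (pow_le_pow_right₀ hβ.le hn))
  have hslope_le : ∀ w₂, ‖g 1 w₂ - g 0 w₂‖ ≤ 2 * M := fun w₂ => by
    obtain ⟨n₀, hn₀⟩ := hradius w₂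
    have hαn : 0 < α ^ n₀ := by positivity
    have hnorm : ‖((α : ℂ) ^ n₀)‖ = α ^ n₀ := by
      rw [norm_pow, Complex.norm_real, Real.norm_of_nonneg (by positivity)]
    have hmul : (g 1 w₂ - g 0 w₂) * (α : ℂ) ^ n₀ = g ((α : ℂ) ^ n₀) w₂ - g 0 w₂ := by
      rw [haff ((α : ℂ) ^ n₀) w₂]; ring
    refine le_of_mul_le_mul_right ?_ hαn
    calc ‖g 1 w₂ - g 0 w₂‖ * α ^ n₀ = ‖g ((α : ℂ) ^ n₀) w₂ - g 0 w₂‖ := by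
          rw [← hnorm, ← norm_mul, hmul]
      _ ≤ M * α ^ n₀ + M * α ^ n₀ := (norm_sub_le _ _).trans (add_le_add
          (hbound n₀ _ _ hnorm.le hn₀) (hbound n₀ _ _ (by simpa using hαn.le) hn₀))
      _ = 2 * M * α ^ n₀ := by ring
  have hslope : g 1 z₂ - g 0 z₂ = g 1 0 - g 0 0 :=
    ((hdiff₂ 1).sub (hdiff₂ 0)).apply_eq_apply_of_bounded
      (isBounded_iff_forall_norm_le.2 ⟨2 * M, forall_mem_range.2 hslope_le⟩) z₂ 0
  rw [haff z₁ z₂, hslope]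

theorem iteratedDeriv_mul_eq_of_comp_mul {f g : ℂ → ℂ} (hf : Differentiable ℂ f) {c d : ℂ}
    (h : ∀ z, f (d * z) = c * g z) (j : ℕ) :
    d ^ j * iteratedDeriv j f 0 = c * iteratedDeriv j g 0 := by
  have hcomp := congrFun (iteratedDeriv_comp_const_mul (n := j) hf.contDiff d) 0
  rw [mul_zero, funext h, iteratedDeriv_const_mul_field] at hcomp
  exact hcomp.symm

theorem continuousOn_coeff_of_forall_eq_sum_pow {𝕜 X : Type*} [Field 𝕜] [CharZero 𝕜]
    [TopologicalSpace 𝕜] [IsTopologicalSemiring 𝕜] [TopologicalSpace X] {s : Set X} {n : ℕ}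
    {f : 𝕜 → X → 𝕜} (hf : ∀ z, ContinuousOn (f z) s) {a : Fin n → X → 𝕜}
    (ha : ∀ x ∈ s, ∀ z, f z x = ∑ j, a j x * z ^ (j : ℕ)) (j : Fin n) :
    ContinuousOn (a j) s := by
  set v : Fin n → 𝕜 := fun k => (k : ℕ)
  set V := vandermonde v
  have hV : IsUnit V.det := isUnit_iff_ne_zero.2 <| det_vandermonde_ne_zero_iff.2
    fun k l h => Fin.val_injective (Nat.cast_injective h)
  have hcoeff : EqOn (a j) (fun x => ∑ k, V⁻¹ j k * f (v k) x) s := fun x hx => by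
    have hvalues : V *ᵥ (a · x) = fun k => f (v k) x := funext fun k => by
      simp only [mulVec, dotProduct, V, vandermonde_apply, ha x hx, mul_comm]
    calc a j x = (V⁻¹ *ᵥ (V *ᵥ (a · x))) j := by
          rw [Matrix.mulVec_mulVec, Matrix.nonsing_inv_mul V hV, Matrix.one_mulVec]
      _ = ∑ k, V⁻¹ j k * f (v k) x := by rw [hvalues]; rfl
  exact ContinuousOn.congr (continuousOn_finsetSum _ fun k _ => continuousOn_const.mul (hf (v k)))
    hcoeff

theorem exists_mem_Icc_apply_eq {φ : ℝ → ℝ} (hφ : SurjOn φ (Ici 0) (Ici 0))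
    (hexp : ∀ x, 0 < x → x < φ x) {x : ℝ} (hx : 0 ≤ x) : ∃ y ∈ Icc 0 x, φ y = x := by
  obtain ⟨y, hy, rfl⟩ := hφ hx
  refine ⟨y, ⟨hy, ?_⟩, rfl⟩
  rcases (mem_Ici.1 hy).eq_or_lt with rfl | hpos
  · exact hx
  · exact (hexp y hpos).le

/-- A least `y₀ ∈ [0, x]` with `‖ρ x‖ ≤ ‖ρ y₀‖` would have a `φ`-preimage `y < y₀` with
`‖ρ y₀‖ ≤ ‖ρ y‖`. -/
theorem eq_zero_of_mul_comp_eq_mul {φ : ℝ → ℝ} (hφ : ∀ x, 0 ≤ x → ∃ y ∈ Icc 0 x, φ y = x)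
    (hexp : ∀ x, 0 < x → x < φ x) {ρ : ℝ → ℂ} (hρ : ContinuousOn ρ (Ici 0)) (hρ0 : ρ 0 = 0)
    {c d : ℂ} (hcd : ‖c‖ ≤ ‖d‖) (hd : d ≠ 0) (hrel : ∀ x, 0 ≤ x → d * ρ (φ x) = c * ρ x)
    {x : ℝ} (hx : 0 ≤ x) : ρ x = 0 := by
  by_contra hne
  set S := Icc 0 x ∩ (fun y => ‖ρ y‖) ⁻¹' Ici ‖ρ x‖
  have hS : IsCompact S := isCompact_Icc.of_isClosed_subset
    ((hρ.mono Icc_subset_Ici_self).norm.preimage_isClosed_of_isClosed isClosed_Icc isClosed_Ici)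
    inter_subset_left
  obtain ⟨y₀, ⟨⟨hy₀, hy₀x⟩, hρy₀⟩, hleast⟩ :=
    hS.exists_isLeast ⟨x, ⟨hx, le_rfl⟩, mem_preimage.2 (mem_Ici.2 le_rfl)⟩
  have hρy₀ : ‖ρ x‖ ≤ ‖ρ y₀‖ := hρy₀
  have hy₀pos : 0 < y₀ := hy₀.lt_of_ne fun h => hne <| norm_le_zero_iff.1 <| by
    simpa [← h, hρ0] using hρy₀
  obtain ⟨y, ⟨hy, hyy₀⟩, hφy⟩ := hφ y₀ hy₀
  have hyy₀ : y < y₀ := hyy₀.lt_of_ne fun h => (hexp y₀ hy₀pos).ne' (h ▸ hφy)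
  have hρy : ‖ρ y₀‖ ≤ ‖ρ y‖ := by
    have hnorm := congrArg norm (hrel y hy)
    rw [norm_mul, norm_mul, hφy] at hnorm
    exact le_of_mul_le_mul_left (hnorm.trans_le (mul_le_mul_of_nonneg_right hcd (norm_nonneg _)))
      (norm_pos_iff.2 hd)
  exact hyy₀.not_ge (hleast ⟨⟨hy, hyy₀.le.trans hy₀x⟩, hρy₀.trans hρy⟩)

theorem mul_slope_eq_of_comp_mul {F G : ℂ → ℂ} {c d : ℂ}
    (hG : ∀ w, G w = G 0 + (G 1 - G 0) * w) (h : ∀ w, G (d * w) = c * F w) :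
    d * (G 1 - G 0) = c * (F 1 - F 0) := by
  have h₁ := h 1
  have h₀ := h 0
  rw [mul_one, hG d] at h₁
  rw [mul_zero] at h₀
  linear_combination h₁ - h₀

theorem slope_eq_slope_zero_of_equivariant {φ : ℝ → ℝ}
    (hφ : ∀ x, 0 ≤ x → ∃ y ∈ Icc 0 x, φ y = x) (hexp : ∀ x, 0 < x → x < φ x)
    (hφmaps : MapsTo φ (Ici 0) (Ici 0)) {F : ℂ → ℝ → ℂ} (hF : ∀ w, ContinuousOn (F w) (Ici 0))
    {c d : ℂ} (hcd : ‖c‖ ≤ ‖d‖) (hd : d ≠ 0)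
    (haff : ∀ x, 0 ≤ x → ∀ w, F w x = F 0 x + (F 1 x - F 0 x) * w)
    (hequiv : ∀ w x, 0 ≤ x → F (d * w) (φ x) = c * F w x)
    (hslope₀ : c * (F 1 0 - F 0 0) = d * (F 1 0 - F 0 0)) {x : ℝ} (hx : 0 ≤ x) :
    F 1 x - F 0 x = F 1 0 - F 0 0 := by
  have hρ := eq_zero_of_mul_comp_eq_mul hφ hexp (ρ := fun x => F 1 x - F 0 x - (F 1 0 - F 0 0))
    (((hF 1).sub (hF 0)).sub continuousOn_const) (sub_self _) hcd hd (fun y hy => by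
      linear_combination mul_slope_eq_of_comp_mul (haff (φ y) (hφmaps hy))
        (fun w => hequiv w y hy) + hslope₀) hx
  exact sub_eq_zero.1 hρ

theorem continuousOn_slice {ξ : ℂ → ℂ → ℝ → ℂ}
    (hξ : ContinuousOn (fun q : ℂ × ℂ × ℝ => ξ q.1 q.2.1 q.2.2) (univ ×ˢ univ ×ˢ Ici 0))
    (z₁ z₂ : ℂ) : ContinuousOn (ξ z₁ z₂) (Ici 0) :=
  hξ.comp (f := fun x : ℝ => (z₁, z₂, x)) (Continuous.continuousOn (by fun_prop))
    fun _ hx => ⟨trivial, trivial, hx⟩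

theorem exists_norm_le_mul_pow_of_equivariant {φ : ℝ → ℝ}
    (hφ : ∀ x, 0 ≤ x → ∃ y ∈ Icc 0 x, φ y = x) {ξ : ℂ → ℂ → ℝ → ℂ}
    (hξ : ContinuousOn (fun q : ℂ × ℂ × ℝ => ξ q.1 q.2.1 q.2.2) (univ ×ˢ univ ×ˢ Ici 0))
    {lam μ c : ℂ} (hlam : lam ≠ 0) (hμ : μ ≠ 0)
    (hequiv : ∀ z₁ z₂ x, 0 ≤ x → ξ (lam * z₁) (μ * z₂) (φ x) = c * ξ z₁ z₂ x)
    {x : ℝ} (hx : 0 ≤ x) :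
    ∃ M, 0 ≤ M ∧ ∀ n : ℕ, ∀ w₁ w₂ : ℂ, ‖w₁‖ ≤ ‖lam‖ ^ n → ‖w₂‖ ≤ ‖μ‖ ^ n →
      ‖ξ w₁ w₂ x‖ ≤ M * ‖c‖ ^ n := by
  obtain ⟨M, hM⟩ := ((isCompact_closedBall (0 : ℂ) 1).prod
    ((isCompact_closedBall (0 : ℂ) 1).prod isCompact_Icc)).exists_bound_of_continuousOn
    (hξ.mono (prod_mono (subset_univ _) (prod_mono (subset_univ _) (Icc_subset_Ici_self :
      Icc 0 x ⊆ Ici 0))))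
  suffices h : ∀ n : ℕ, ∀ y ∈ Icc 0 x, ∀ w₁ w₂ : ℂ, ‖w₁‖ ≤ ‖lam‖ ^ n → ‖w₂‖ ≤ ‖μ‖ ^ n →
      ‖ξ w₁ w₂ y‖ ≤ max M 0 * ‖c‖ ^ n from
    ⟨max M 0, le_max_right _ _, fun n => h n x ⟨hx, le_rfl⟩⟩
  intro n
  induction n with
  | zero =>
    intro y hy w₁ w₂ hw₁ hw₂
    rw [pow_zero, mul_one]
    exact (hM (w₁, w₂, y) ⟨mem_closedBall_zero_iff.2 (by simpa using hw₁),
      mem_closedBall_zero_iff.2 (by simpa using hw₂), hy⟩).trans (le_max_left _ _)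
  | succ n ih =>
    intro y hy w₁ w₂ hw₁ hw₂
    obtain ⟨y', hy', rfl⟩ := hφ y hy.1
    have hnorm_div : ∀ {w d : ℂ} {k : ℕ}, d ≠ 0 → ‖w‖ ≤ ‖d‖ ^ (k + 1) → ‖w / d‖ ≤ ‖d‖ ^ k :=
      fun hd hw => by
        rw [norm_div, div_le_iff₀ (norm_pos_iff.2 hd), ← pow_succ]; exact hw
    have hξy := hequiv (w₁ / lam) (w₂ / μ) y' hy'.1
    rw [mul_div_cancel₀ _ hlam, mul_div_cancel₀ _ hμ] at hξy
    calc ‖ξ w₁ w₂ (φ y')‖ = ‖c‖ * ‖ξ (w₁ / lam) (w₂ / μ) y'‖ := by rw [hξy, norm_mul]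
      _ ≤ ‖c‖ * (max M 0 * ‖c‖ ^ n) := by
          gcongr
          exact ih y' ⟨hy'.1, hy'.2.trans hy.2⟩ _ _ (hnorm_div hlam hw₁) (hnorm_div hμ hw₂)
      _ = max M 0 * ‖c‖ ^ (n + 1) := by ring

section Equivariant

variable {lam μ : ℂ} {φ : ℝ → ℝ} {ξ : ℂ → ℂ → ℝ → ℂ}

theorem equivariant_eq_add_mul_left (hlam : 1 < ‖lam‖) (hμ : 1 < ‖μ‖) {c : ℂ} (hc : ‖c‖ ≤ ‖lam‖)
    (hφ : ∀ x, 0 ≤ x → ∃ y ∈ Icc 0 x, φ y = x)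
    (hcont : ContinuousOn (fun q : ℂ × ℂ × ℝ => ξ q.1 q.2.1 q.2.2) (univ ×ˢ univ ×ˢ Ici 0))
    (hholo : ∀ x, 0 ≤ x → Differentiable ℂ (fun z : ℂ × ℂ => ξ z.1 z.2 x))
    (hequiv : ∀ z₁ z₂ x, 0 ≤ x → ξ (lam * z₁) (μ * z₂) (φ x) = c * ξ z₁ z₂ x)
    {x : ℝ} (hx : 0 ≤ x) (z₁ z₂ : ℂ) :
    ξ z₁ z₂ x = ξ 0 z₂ x + (ξ 1 0 x - ξ 0 0 x) * z₁ := by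
  obtain ⟨M, hM0, hM⟩ := exists_norm_le_mul_pow_of_equivariant hφ hcont
    (norm_pos_iff.1 (one_pos.trans hlam)) (norm_pos_iff.1 (one_pos.trans hμ)) hequiv hx
  exact eq_add_mul_of_norm_le_pow₂ (g := fun w₁ w₂ => ξ w₁ w₂ x) (hholo x hx) hlam hμ
    (fun n w₁ w₂ hw₁ hw₂ => (hM n w₁ w₂ hw₁ hw₂).trans
      (mul_le_mul_of_nonneg_left (pow_le_pow_left₀ (norm_nonneg c) hc n) hM0)) z₁ z₂

theorem equivariant_eq_add_left (hlam : 1 < ‖lam‖) (hμ : 1 < ‖μ‖)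
    (hφ : ∀ x, 0 ≤ x → ∃ y ∈ Icc 0 x, φ y = x) (hexp : ∀ x, 0 < x → x < φ x)
    (hφmaps : MapsTo φ (Ici 0) (Ici 0))
    (hcont : ContinuousOn (fun q : ℂ × ℂ × ℝ => ξ q.1 q.2.1 q.2.2) (univ ×ˢ univ ×ˢ Ici 0))
    (hholo : ∀ x, 0 ≤ x → Differentiable ℂ (fun z : ℂ × ℂ => ξ z.1 z.2 x))
    (hbd : ∀ z₁ z₂, ξ z₁ z₂ 0 = z₁)
    (hequiv : ∀ z₁ z₂ x, 0 ≤ x → ξ (lam * z₁) (μ * z₂) (φ x) = lam * ξ z₁ z₂ x)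
    {x : ℝ} (hx : 0 ≤ x) (z₁ z₂ : ℂ) : ξ z₁ z₂ x = z₁ + ξ 0 z₂ x := by
  have haff := fun y (hy : 0 ≤ y) => equivariant_eq_add_mul_left hlam hμ le_rfl hφ hcont hholo hequiv hy
  have hslope := slope_eq_slope_zero_of_equivariant hφ hexp hφmaps (F := fun w y => ξ w 0 y)
    (fun w => continuousOn_slice hcont w 0) le_rfl (norm_pos_iff.1 (one_pos.trans hlam))
    (fun y hy w => haff y hy w 0) (fun w y hy => by simpa using hequiv w 0 y hy) rfl hx
  rw [haff x hx, hslope, hbd, hbd]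
  ring

theorem equivariant_apply_zero_eq_sum_pow (hlam : lam ≠ 0) (hμ : 1 < ‖μ‖) {p : ℕ}
    (hp : ‖lam‖ < ‖μ‖ ^ (p + 1)) (hφ : ∀ x, 0 ≤ x → ∃ y ∈ Icc 0 x, φ y = x)
    (hcont : ContinuousOn (fun q : ℂ × ℂ × ℝ => ξ q.1 q.2.1 q.2.2) (univ ×ˢ univ ×ˢ Ici 0))
    (hholo : ∀ x, 0 ≤ x → Differentiable ℂ (fun z : ℂ × ℂ => ξ z.1 z.2 x))
    (hequiv : ∀ z₁ z₂ x, 0 ≤ x → ξ (lam * z₁) (μ * z₂) (φ x) = lam * ξ z₁ z₂ x)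
    {x : ℝ} (hx : 0 ≤ x) (z : ℂ) :
    ξ 0 z x = ∑ j : Fin (p + 1),
      (Nat.factorial j : ℂ)⁻¹ * iteratedDeriv j (ξ 0 · x) 0 * z ^ (j : ℕ) := by
  obtain ⟨M, -, hM⟩ := exists_norm_le_mul_pow_of_equivariant hφ hcont hlam
    (norm_pos_iff.1 (one_pos.trans hμ)) hequiv hx
  exact eq_sum_pow_of_norm_le_pow ((hholo x hx).comp ((differentiable_const 0).prodMk
    differentiable_id)) (norm_nonneg lam) hμ.le hp
    (Eventually.of_forall fun n w hw => hM n 0 w (by simp) hw) z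

theorem pow_mul_iteratedDeriv_eq_of_equivariant (hφmaps : MapsTo φ (Ici 0) (Ici 0))
    (hholo : ∀ x, 0 ≤ x → Differentiable ℂ (fun z : ℂ × ℂ => ξ z.1 z.2 x))
    (hequiv : ∀ z₁ z₂ x, 0 ≤ x → ξ (lam * z₁) (μ * z₂) (φ x) = lam * ξ z₁ z₂ x)
    {x : ℝ} (hx : 0 ≤ x) (j : ℕ) :
    μ ^ j * iteratedDeriv j (ξ 0 · (φ x)) 0 = lam * iteratedDeriv j (ξ 0 · x) 0 :=
  iteratedDeriv_mul_eq_of_comp_mul ((hholo (φ x) (hφmaps hx)).comp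
    ((differentiable_const 0).prodMk differentiable_id)) (fun z => by simpa using hequiv 0 z x hx) j

theorem equivariant_eq_add_right (hμ : 1 < ‖μ‖) (hlamμ : ‖μ‖ ≤ ‖lam‖)
    (hφ : ∀ x, 0 ≤ x → ∃ y ∈ Icc 0 x, φ y = x) (hexp : ∀ x, 0 < x → x < φ x)
    (hφmaps : MapsTo φ (Ici 0) (Ici 0))
    (hcont : ContinuousOn (fun q : ℂ × ℂ × ℝ => ξ q.1 q.2.1 q.2.2) (univ ×ˢ univ ×ˢ Ici 0))
    (hholo : ∀ x, 0 ≤ x → Differentiable ℂ (fun z : ℂ × ℂ => ξ z.1 z.2 x))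
    (hbd : ∀ z₁ z₂, ξ z₁ z₂ 0 = z₂)
    (hequiv : ∀ z₁ z₂ x, 0 ≤ x → ξ (lam * z₁) (μ * z₂) (φ x) = μ * ξ z₁ z₂ x)
    {x : ℝ} (hx : 0 ≤ x) (z₁ z₂ : ℂ) : ξ z₁ z₂ x = z₂ + ξ 0 0 x := by
  have hlam : 1 < ‖lam‖ := hμ.trans_le hlamμ
  have hμ0 : μ ≠ 0 := norm_pos_iff.1 (one_pos.trans hμ)
  have haff₁ := fun y (hy : 0 ≤ y) => equivariant_eq_add_mul_left hlam hμ hlamμ hφ hcont hholo hequiv hy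
  have hslope₁ := slope_eq_slope_zero_of_equivariant hφ hexp hφmaps (F := fun w y => ξ w 0 y)
    (fun w => continuousOn_slice hcont w 0) hlamμ (norm_pos_iff.1 (one_pos.trans hlam))
    (fun y hy w => haff₁ y hy w 0) (fun w y hy => by simpa using hequiv w 0 y hy)
    (by simp [hbd]) hx
  have haff₂ : ∀ y, 0 ≤ y → ∀ w, ξ 0 w y = ξ 0 0 y + (ξ 0 1 y - ξ 0 0 y) * w := fun y hy => by
    obtain ⟨M, -, hM⟩ := exists_norm_le_mul_pow_of_equivariant hφ hcont
      (norm_pos_iff.1 (one_pos.trans hlam)) hμ0 hequiv hy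
    exact eq_add_mul_of_norm_le_pow ((hholo y hy).comp ((differentiable_const 0).prodMk
      differentiable_id)) hμ (Eventually.of_forall fun n w hw => hM n 0 w (by simp) hw)
  have hslope₂ := slope_eq_slope_zero_of_equivariant hφ hexp hφmaps (F := fun w y => ξ 0 w y)
    (fun w => continuousOn_slice hcont 0 w) le_rfl hμ0 haff₂
    (fun w y hy => by simpa using hequiv 0 w y hy) rfl hx
  rw [haff₁ x hx, hslope₁, haff₂ x hx, hslope₂]
  simp only [hbd]
  ring

end Equivariant

theorem case_3_classification_general (lam μ : ℂ)
    (hμ : 1 < ‖μ‖) (hlamμ : ‖μ‖ ≤ ‖lam‖)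
    (p : ℕ) (hp : p = ⌊Real.log (‖lam‖) / Real.log (‖μ‖)⌋₊)
    (φ : ℝ → ℝ)
    (hφbij : Set.BijOn φ (Set.Ici 0) (Set.Ici 0))
    (hexp : ∀ x : ℝ, 0 < x → x < φ x)
    (ξ₁ ξ₂ : ℂ → ℂ → ℝ → ℂ)
    (hcont₁ : ContinuousOn (fun q : ℂ × ℂ × ℝ => ξ₁ q.1 q.2.1 q.2.2)
      (Set.univ ×ˢ Set.univ ×ˢ Set.Ici 0))
    (hcont₂ : ContinuousOn (fun q : ℂ × ℂ × ℝ => ξ₂ q.1 q.2.1 q.2.2)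
      (Set.univ ×ˢ Set.univ ×ˢ Set.Ici 0))
    (hholo₁ : ∀ x : ℝ, 0 ≤ x → Differentiable ℂ (fun z : ℂ × ℂ => ξ₁ z.1 z.2 x))
    (hholo₂ : ∀ x : ℝ, 0 ≤ x → Differentiable ℂ (fun z : ℂ × ℂ => ξ₂ z.1 z.2 x))
    (hbd₁ : ∀ z₁ z₂ : ℂ, ξ₁ z₁ z₂ 0 = z₁)
    (hbd₂ : ∀ z₁ z₂ : ℂ, ξ₂ z₁ z₂ 0 = z₂)
    (hL1 : ∀ z₁ z₂ : ℂ, ∀ x : ℝ, 0 ≤ x →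
      ξ₁ (lam * z₁) (μ * z₂) (φ x) = lam * ξ₁ z₁ z₂ x)
    (hL2 : ∀ z₁ z₂ : ℂ, ∀ x : ℝ, 0 ≤ x →
      ξ₂ (lam * z₁) (μ * z₂) (φ x) = μ * ξ₂ z₁ z₂ x) :
    ∃ a : Fin (p + 1) → ℝ → ℂ, ∃ b : ℝ → ℂ,
      (∀ j : Fin (p + 1), ContinuousOn (a j) (Set.Ici 0)) ∧
      ContinuousOn b (Set.Ici 0) ∧
      (∀ j : Fin (p + 1), a j 0 = 0) ∧ b 0 = 0 ∧
      (∀ j : Fin (p + 1), ∀ x : ℝ, 0 ≤ x →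
        a j (φ x) = (lam / μ ^ (j : ℕ)) * a j x) ∧
      (∀ x : ℝ, 0 ≤ x → b (φ x) = μ * b x) ∧
      ∀ z₁ z₂ : ℂ, ∀ x : ℝ, 0 ≤ x →
        ξ₁ z₁ z₂ x = z₁ + ∑ j : Fin (p + 1), a j x * z₂ ^ (j : ℕ) ∧
        ξ₂ z₁ z₂ x = z₂ + b x := by
  have hlam : 1 < ‖lam‖ := hμ.trans_le hlamμ
  have hlam0 : lam ≠ 0 := norm_pos_iff.1 (one_pos.trans hlam)
  have hμ0 : μ ≠ 0 := norm_pos_iff.1 (one_pos.trans hμ)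
  have hφ := fun x (hx : 0 ≤ x) => exists_mem_Icc_apply_eq hφbij.surjOn hexp hx
  set a : Fin (p + 1) → ℝ → ℂ :=
    fun j x => (Nat.factorial j : ℂ)⁻¹ * iteratedDeriv j (ξ₁ 0 · x) 0 with ha
  have hrepr : ∀ x, 0 ≤ x → ∀ z, ξ₁ 0 z x = ∑ j, a j x * z ^ (j : ℕ) := fun x hx =>
    equivariant_apply_zero_eq_sum_pow hlam0 hμ
      (hp ▸ lt_pow_floor_log_div_log_add_one (one_pos.trans hlam) hμ) hφ hcont₁ hholo₁ hL1 hx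
  refine ⟨a, (ξ₂ 0 0 ·), continuousOn_coeff_of_forall_eq_sum_pow
    (fun z => continuousOn_slice hcont₁ 0 z) hrepr, continuousOn_slice hcont₂ 0 0,
    fun j => by simp [ha, hbd₁], hbd₂ 0 0, fun j x hx => ?_,
    fun x hx => by simpa using hL2 0 0 x hx, fun z₁ z₂ x hx => ⟨?_,
      equivariant_eq_add_right hμ hlamμ hφ hexp hφbij.mapsTo hcont₂ hholo₂ hbd₂ hL2 hx z₁ z₂⟩⟩
  · have h := pow_mul_iteratedDeriv_eq_of_equivariant hφbij.mapsTo hholo₁ hL1 hx j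
    rw [ha, div_mul_eq_mul_div, eq_div_iff (pow_ne_zero _ hμ0)]
    linear_combination (Nat.factorial j : ℂ)⁻¹ * h
  · rw [equivariant_eq_add_left hlam hμ hφ hexp hφbij.mapsTo hcont₁ hholo₁ hbd₁ hL1 hx,
      hrepr x hx]

/-- Case 3 of Section 3.2 (underlying Theorem 3.10 (2)): for `G(z₁,z₂) = (λz₁, μz₂)`
with `|λ| ≥ |μ| > 1` and `λ ≠ μᵐ` for all `m ≥ 1`, with `p = ⌊log|λ|/log|μ|⌋`,
any leafwise-holomorphic lift `(ξ₁, ξ₂)` restricting to the identity on the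
boundary and equivariant for `T` has the form `ξ₁ = z₁ + Σ_{j≤p} aⱼ(x)·z₂ʲ`,
`ξ₂ = z₂ + b(x)` with `aⱼ ∈ 𝒵_{φ,λμ^{−j}}`, `b ∈ 𝒵_{φ,μ}`. -/
theorem case_3_classification (lam μ : ℂ)
    (hμ : 1 < ‖μ‖) (hlamμ : ‖μ‖ ≤ ‖lam‖)
    (hne : ∀ m : ℕ, 0 < m → lam ≠ μ ^ m)
    (p : ℕ) (hp : p = ⌊Real.log (‖lam‖) / Real.log (‖μ‖)⌋₊)
    (φ : ℝ → ℝ)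
    (hφcont : ContinuousOn φ (Set.Ici 0))
    (hφmono : StrictMonoOn φ (Set.Ici 0))
    (hφbij : Set.BijOn φ (Set.Ici 0) (Set.Ici 0))
    (hφ0 : φ 0 = 0)
    (hexp : ∀ x : ℝ, 0 < x → x < φ x)
    (ξ₁ ξ₂ : ℂ → ℂ → ℝ → ℂ)
    (hcont₁ : ContinuousOn (fun q : ℂ × ℂ × ℝ => ξ₁ q.1 q.2.1 q.2.2)
      (Set.univ ×ˢ Set.univ ×ˢ Set.Ici 0))
    (hcont₂ : ContinuousOn (fun q : ℂ × ℂ × ℝ => ξ₂ q.1 q.2.1 q.2.2)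
      (Set.univ ×ˢ Set.univ ×ˢ Set.Ici 0))
    (hholo₁ : ∀ x : ℝ, 0 ≤ x → Differentiable ℂ (fun z : ℂ × ℂ => ξ₁ z.1 z.2 x))
    (hholo₂ : ∀ x : ℝ, 0 ≤ x → Differentiable ℂ (fun z : ℂ × ℂ => ξ₂ z.1 z.2 x))
    (hbd₁ : ∀ z₁ z₂ : ℂ, ξ₁ z₁ z₂ 0 = z₁)
    (hbd₂ : ∀ z₁ z₂ : ℂ, ξ₂ z₁ z₂ 0 = z₂)
    (hL1 : ∀ z₁ z₂ : ℂ, ∀ x : ℝ, 0 ≤ x →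
      ξ₁ (lam * z₁) (μ * z₂) (φ x) = lam * ξ₁ z₁ z₂ x)
    (hL2 : ∀ z₁ z₂ : ℂ, ∀ x : ℝ, 0 ≤ x →
      ξ₂ (lam * z₁) (μ * z₂) (φ x) = μ * ξ₂ z₁ z₂ x) :
    ∃ a : Fin (p + 1) → ℝ → ℂ, ∃ b : ℝ → ℂ,
      (∀ j : Fin (p + 1), ContinuousOn (a j) (Set.Ici 0)) ∧
      ContinuousOn b (Set.Ici 0) ∧
      (∀ j : Fin (p + 1), a j 0 = 0) ∧ b 0 = 0 ∧
      (∀ j : Fin (p + 1), ∀ x : ℝ, 0 ≤ x →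
        a j (φ x) = (lam / μ ^ (j : ℕ)) * a j x) ∧
      (∀ x : ℝ, 0 ≤ x → b (φ x) = μ * b x) ∧
      ∀ z₁ z₂ : ℂ, ∀ x : ℝ, 0 ≤ x →
        ξ₁ z₁ z₂ x = z₁ + ∑ j : Fin (p + 1), a j x * z₂ ^ (j : ℕ) ∧
        ξ₂ z₁ z₂ x = z₂ + b x :=
  case_3_classification_general lam μ hμ hlamμ p hp φ hφbij hexp ξ₁ ξ₂ hcont₁ hcont₂ hholo₁ hholo₂
    hbd₁ hbd₂ hL1 hL2
end
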